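/- arXiv:math/0502203 — 12 statements merged into one kernel-verified Lean document; each statement's English description precedes it below -/
import Mathlib

section
/- Let p(x) = Σ_{n≥1} α_n x^n be a formal power series over a field of characteristic zero with α_1 ≠ 0, and let q(x) be its compositional inverse (q ∘ p = p ∘ q = x). Then for all integers n, k: n·[x^n](q(x)^k) = k·[x^{n-k}]((x/p(x))^n), where [x^m] denotes the coefficient of x^m in a formal Laurent series. -/
open PowerSeries

/-- Composition (substitution) of formal power series: `pcomp f g = f ∘ g`,
substituting `g` (with zero constant term) into `f`. -/
noncomputable def pcomp {K : Type*} [CommRing K] (f g : PowerSeries K) : PowerSeries K :=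
  PowerSeries.mk fun n => ∑ k ∈ Finset.range (n + 1),
    PowerSeries.coeff k f * PowerSeries.coeff n (g ^ k)

namespace Scratch

open HahnSeries Finset

variable {K : Type*} [Field K]

noncomputable def D (f : LaurentSeries K) : LaurentSeries K where
  coeff n := ((n + 1 : ℤ) : K) * f.coeff (n + 1)
  isPWO_support' := by
    refine (f.isPWO_support.image_of_monotone (f := fun m => m - 1)
      (fun a b h => by simpa using h)).mono ?_
    intro n hn
    have h1 : f.coeff (n + 1) ≠ 0 := by
      intro h
      apply hn
      simp [Function.mem_support, h]
    exact ⟨n + 1, h1, by ring⟩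

@[simp] theorem coeff_D (f : LaurentSeries K) (n : ℤ) :
    (D f).coeff n = ((n + 1 : ℤ) : K) * f.coeff (n + 1) := rfl


theorem res_D (f : LaurentSeries K) : (D f).coeff (-1) = 0 := by
  simp

theorem D_one : D (1 : LaurentSeries K) = 0 := by
  ext n
  rcases eq_or_ne n (-1) with rfl | hn
  · simp
  · have h1 : (1 : LaurentSeries K).coeff (n + 1) = 0 := by
      rw [HahnSeries.coeff_one, if_neg (by omega)]
    rw [coeff_D, h1, mul_zero, HahnSeries.coeff_zero]

theorem D_X : D (HahnSeries.single (1 : ℤ) (1 : K)) = 1 := by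
  ext n
  rcases eq_or_ne n 0 with rfl | hn
  · simp [HahnSeries.coeff_single, HahnSeries.coeff_one]
  · rcases eq_or_ne n (-1) with rfl | hn1
    · simp [HahnSeries.coeff_single, HahnSeries.coeff_one]
    · rw [coeff_D, HahnSeries.coeff_single, if_neg (by omega), HahnSeries.coeff_one,
        if_neg hn, mul_zero]

theorem support_D_subset (f : LaurentSeries K) :
    (D f).support ⊆ (fun m : ℤ => m - 1) '' f.support := by
  intro n hn
  rw [HahnSeries.mem_support, coeff_D] at hn
  exact ⟨n + 1, right_ne_zero_of_mul hn, by ring⟩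

theorem isPWO_shift (f : LaurentSeries K) : ((fun m : ℤ => m - 1) '' f.support).IsPWO :=
  f.isPWO_support.image_of_monotone fun a b h => by simpa using h

theorem D_mul (f g : LaurentSeries K) : D (f * g) = D f * g + f * D g := by
  ext n
  rw [HahnSeries.coeff_add, coeff_D, HahnSeries.coeff_mul,
    HahnSeries.coeff_mul_left' (isPWO_shift f) (support_D_subset f),
    HahnSeries.coeff_mul_right' (isPWO_shift g) (support_D_subset g)]
  have h1 : ∑ ij ∈ Finset.antidiagonal (isPWO_shift f) g.isPWO_support n,
      (D f).coeff ij.1 * g.coeff ij.2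
      = ∑ ij ∈ Finset.antidiagonal f.isPWO_support g.isPWO_support (n + 1),
        ((ij.1 : ℤ) : K) * f.coeff ij.1 * g.coeff ij.2 := by
    refine Finset.sum_nbij' (fun ij => (ij.1 + 1, ij.2)) (fun ij => (ij.1 - 1, ij.2))
      ?_ ?_ ?_ ?_ ?_
    · rintro ⟨a, b⟩ hab
      obtain ⟨⟨x, hx, hxe⟩, hb, hs⟩ := mem_addAntidiagonal.1 hab
      simp only at hxe
      dsimp only
      have hxa : x = a + 1 := by omega
      exact mem_addAntidiagonal.2 ⟨hxa ▸ hx, hb, by omega⟩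
    · rintro ⟨a, b⟩ hab
      obtain ⟨ha, hb, hs⟩ := mem_addAntidiagonal.1 hab
      dsimp only
      exact mem_addAntidiagonal.2 ⟨⟨a, ha, rfl⟩, hb, by omega⟩
    · rintro ⟨a, b⟩ _; simp
    · rintro ⟨a, b⟩ _; simp
    · rintro ⟨a, b⟩ _
      rw [coeff_D, mul_assoc]
  have h2 : ∑ ij ∈ Finset.antidiagonal f.isPWO_support (isPWO_shift g) n,
      f.coeff ij.1 * (D g).coeff ij.2
      = ∑ ij ∈ Finset.antidiagonal f.isPWO_support g.isPWO_support (n + 1),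
        f.coeff ij.1 * (((ij.2 : ℤ) : K) * g.coeff ij.2) := by
    refine Finset.sum_nbij' (fun ij => (ij.1, ij.2 + 1)) (fun ij => (ij.1, ij.2 - 1))
      ?_ ?_ ?_ ?_ ?_
    · rintro ⟨a, b⟩ hab
      obtain ⟨ha, ⟨x, hx, hxe⟩, hs⟩ := mem_addAntidiagonal.1 hab
      simp only at hxe
      dsimp only
      have hxb : x = b + 1 := by omega
      exact mem_addAntidiagonal.2 ⟨ha, hxb ▸ hx, by omega⟩
    · rintro ⟨a, b⟩ hab
      obtain ⟨ha, hb, hs⟩ := mem_addAntidiagonal.1 hab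
      dsimp only
      exact mem_addAntidiagonal.2 ⟨ha, ⟨b, hb, rfl⟩, by omega⟩
    · rintro ⟨a, b⟩ _; simp
    · rintro ⟨a, b⟩ _; simp
    · rintro ⟨a, b⟩ _
      rw [coeff_D]
  rw [h1, h2, Finset.mul_sum, ← Finset.sum_add_distrib]
  refine Finset.sum_congr rfl fun ij hij => ?_
  have hs := (mem_addAntidiagonal.1 hij).2.2
  rw [← hs]
  push_cast
  ring


theorem D_pow_succ (f : LaurentSeries K) (m : ℕ) :
    D (f ^ (m + 1)) = ((m + 1 : ℕ) : K) • (f ^ m * D f) := by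
  induction m with
  | zero => simp
  | succ m ih =>
      rw [pow_succ f (m + 1), D_mul, ih, ← HahnSeries.C_mul_eq_smul, ← HahnSeries.C_mul_eq_smul]
      have hc : ((m + 1 + 1 : ℕ) : K) = ((m + 1 : ℕ) : K) + 1 := by push_cast; ring
      rw [hc, map_add, map_one, pow_succ]
      ring

theorem D_inv (g : LaurentSeries K) (hg : g ≠ 0) : D g⁻¹ = -(g⁻¹ * g⁻¹ * D g) := by
  have h := D_mul g g⁻¹
  rw [mul_inv_cancel₀ hg, D_one] at h
  have h2 : g * D g⁻¹ = -(D g * g⁻¹) := eq_neg_of_add_eq_zero_right h.symm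
  apply mul_left_cancel₀ hg
  rw [h2]
  have h3 : g * -(g⁻¹ * g⁻¹ * D g) = -((g * g⁻¹) * (g⁻¹ * D g)) := by ring
  rw [h3, mul_inv_cancel₀ hg, one_mul]
  ring

theorem D_zpow (f : LaurentSeries K) (hf : f ≠ 0) (t : ℤ) :
    D (f ^ t) = (t : K) • (f ^ (t - 1) * D f) := by
  obtain m | m := t
  · match m with
    | 0 => simp [D_one]
    | (m + 1) =>
        rw [show (Int.ofNat (m + 1)) = ((m + 1 : ℕ) : ℤ) from rfl, zpow_natCast, D_pow_succ]
        have h1 : (((m + 1 : ℕ) : ℤ) - 1) = (m : ℤ) := by push_cast; ring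
        rw [h1, zpow_natCast]
        norm_cast
  · rw [zpow_negSucc, D_inv _ (pow_ne_zero _ hf), D_pow_succ,
      ← HahnSeries.C_mul_eq_smul, ← HahnSeries.C_mul_eq_smul]
    have h1 : ((f ^ (m + 1) : LaurentSeries K))⁻¹ = f ^ (-(m + 1 : ℕ) : ℤ) := by
      rw [← zpow_natCast, ← zpow_neg]
    have h2 : ((Int.negSucc m : ℤ) : K) = -((m + 1 : ℕ) : K) := by
      rw [Int.negSucc_eq]; push_cast; ring
    have h3 : (Int.negSucc m - 1 : ℤ) = (-(m + 1 : ℕ) : ℤ) + ((-(m + 1 : ℕ) : ℤ) + m) := by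
      rw [Int.negSucc_eq]; push_cast; ring
    rw [h1, h2, map_neg, h3, zpow_add₀ hf, zpow_add₀ hf, zpow_natCast]
    ring

theorem res_zpow_D [CharZero K] {f : LaurentSeries K} (hf : f ≠ 0) {t : ℤ} (ht : t ≠ 0) :
    (f ^ (t - 1) * D f).coeff (-1) = 0 := by
  have h := congrArg (fun x : LaurentSeries K => x.coeff (-1)) (D_zpow f hf t)
  simp only [HahnSeries.coeff_smul, smul_eq_mul, coeff_D] at h
  have h0 : ((-1 + 1 : ℤ) : K) = 0 := by norm_num
  rw [h0, zero_mul] at h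
  exact ((mul_eq_zero.mp h.symm).resolve_left (Int.cast_ne_zero.2 ht))

theorem single_nat_pow (m : ℕ) : (HahnSeries.single (1 : ℤ) (1 : K)) ^ m
    = HahnSeries.single (m : ℤ) 1 := by
  rw [HahnSeries.single_pow]
  norm_num

theorem single_zpow (k : ℤ) : (HahnSeries.single (1 : ℤ) (1 : K)) ^ k
    = HahnSeries.single k 1 := by
  obtain m | m := k
  · rw [Int.ofNat_eq_coe, zpow_natCast, single_nat_pow]
  · rw [zpow_negSucc, single_nat_pow]
    refine inv_eq_of_mul_eq_one_right ?_
    rw [HahnSeries.single_mul_single, one_mul]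
    have : ((m + 1 : ℕ) : ℤ) + Int.negSucc m = 0 := by
      rw [Int.negSucc_eq]; push_cast; ring
    rw [this, HahnSeries.single_zero_one]

theorem single_mul_coeff' (x : LaurentSeries K) (k n : ℤ) :
    (HahnSeries.single k (1 : K) * x).coeff n = x.coeff (n - k) := by
  have h := HahnSeries.coeff_single_mul_add (r := (1 : K)) (x := x) (a := n - k) (b := k)
  rw [sub_add_cancel] at h
  rw [h, one_mul]

theorem mul_coeff_eq_zero {x y : LaurentSeries K} {a b m : ℤ}
    (hx : ∀ i < a, x.coeff i = 0) (hy : ∀ j < b, y.coeff j = 0) (hm : m < a + b) :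
    (x * y).coeff m = 0 := by
  rw [HahnSeries.coeff_mul]
  refine Finset.sum_eq_zero fun ij hij => ?_
  obtain ⟨hi, hj, hs⟩ := mem_addAntidiagonal.1 hij
  have h1 : a ≤ ij.1 := le_of_not_gt fun h => hi (hx _ h)
  have h2 : b ≤ ij.2 := le_of_not_gt fun h => hj (hy _ h)
  omega

theorem one_coeff_eq_zero {m : ℤ} (hm : m < 0) : (1 : LaurentSeries K).coeff m = 0 := by
  rw [HahnSeries.coeff_one, if_neg (by omega)]

theorem pow_coeff_eq_zero {x : LaurentSeries K} (hx : ∀ i < (1 : ℤ), x.coeff i = 0) :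
    ∀ (n : ℕ) (m : ℤ), m < n → (x ^ n).coeff m = 0 := by
  intro n
  induction n with
  | zero => intro m hm; exact one_coeff_eq_zero (by exact_mod_cast hm)
  | succ n ih =>
      intro m hm
      rw [pow_succ]
      exact mul_coeff_eq_zero (a := (n : ℤ)) (b := 1) ih hx (by push_cast at hm ⊢; omega)

section Subst

variable (p : PowerSeries K) (hp : 0 < ((p : LaurentSeries K)).orderTop)

theorem coeff_coe_neg {f : PowerSeries K} {m : ℤ} (hm : m < 0) :
    ((f : LaurentSeries K)).coeff m = 0 := by
  rw [PowerSeries.coeff_coe, if_pos hm]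

/-- the summable family `n ↦ (coeff n f) • p^n`. -/
noncomputable def subFam (f : PowerSeries K) : HahnSeries.SummableFamily ℤ K ℕ where
  toFun n := PowerSeries.coeff n f • ((p : LaurentSeries K) ^ n)
  isPWO_iUnion_support' := by
    refine (HahnSeries.SummableFamily.isPWO_iUnion_support_powers (HahnSeries.zero_le_orderTop_iff.mp (le_of_lt hp))).mono ?_
    refine Set.iUnion_mono fun n => ?_
    intro g hg
    rw [HahnSeries.mem_support, HahnSeries.coeff_smul] at hg
    exact right_ne_zero_of_smul hg
  finite_co_support' g := by
    refine ((HahnSeries.SummableFamily.powers (p : LaurentSeries K)).finite_co_support g).subset fun n hn => ?_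
    simp only [Set.mem_setOf_eq, HahnSeries.coeff_smul] at hn
    simp only [Set.mem_setOf_eq, Function.mem_support, HahnSeries.SummableFamily.powers_of_orderTop_pos hp]
    exact right_ne_zero_of_smul hn

theorem subFam_apply (f : PowerSeries K) (n : ℕ) :
    subFam p hp f n = PowerSeries.coeff n f • ((p : LaurentSeries K) ^ n) := rfl

/-- substitution of `p` into `f`. -/
noncomputable def Sub (f : PowerSeries K) : LaurentSeries K := (subFam p hp f).hsum

theorem subFam_co_support (hp1 : ∀ i < (1:ℤ), ((p : LaurentSeries K)).coeff i = 0)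
    (f : PowerSeries K) (g : ℤ) :
    { n : ℕ | (subFam p hp f n).coeff g ≠ 0 } ⊆ ↑(Finset.range (g.toNat + 1)) := by
  intro n hn
  simp only [Set.mem_setOf_eq, subFam_apply, HahnSeries.coeff_smul] at hn
  have h2 : ((p : LaurentSeries K) ^ n).coeff g ≠ 0 := right_ne_zero_of_smul hn
  have h3 : ¬ g < n := fun h => h2 (pow_coeff_eq_zero hp1 n g h)
  simp only [Finset.coe_range, Set.mem_Iio]
  omega

theorem Sub_coeff (hp1 : ∀ i < (1:ℤ), ((p : LaurentSeries K)).coeff i = 0)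
    (f : PowerSeries K) (g : ℤ) :
    (Sub p hp f).coeff g = ∑ n ∈ Finset.range (g.toNat + 1),
      PowerSeries.coeff n f * ((p : LaurentSeries K) ^ n).coeff g := by
  rw [Sub, HahnSeries.SummableFamily.coeff_hsum_eq_sum_of_subset (subFam_co_support p hp hp1 f g)]
  refine Finset.sum_congr rfl fun n _ => ?_
  rw [subFam_apply, HahnSeries.coeff_smul, smul_eq_mul]

theorem pcomp_one' : pcomp (1 : PowerSeries K) p = 1 := by
  ext n
  rw [pcomp, PowerSeries.coeff_mk]
  simp only [PowerSeries.coeff_one, ite_mul, one_mul, zero_mul]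
  rw [Finset.sum_ite_eq' (Finset.range (n + 1)) 0 (fun k => PowerSeries.coeff n (p ^ k)),
    if_pos (Finset.mem_range.2 (by omega)), pow_zero, PowerSeries.coeff_one]

theorem pcomp_X' (hp0 : PowerSeries.constantCoeff p = 0) : pcomp PowerSeries.X p = p := by
  ext n
  rw [pcomp, PowerSeries.coeff_mk]
  simp only [PowerSeries.coeff_X, ite_mul, one_mul, zero_mul]
  rw [Finset.sum_ite_eq' (Finset.range (n + 1)) 1 (fun k => PowerSeries.coeff n (p ^ k))]
  rcases Nat.eq_zero_or_pos n with rfl | hn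
  · rw [if_neg (by simp), PowerSeries.coeff_zero_eq_constantCoeff, hp0]
  · rw [if_pos (Finset.mem_range.2 (by omega)), pow_one]

theorem Sub_eq_coe (hp1 : ∀ i < (1:ℤ), ((p : LaurentSeries K)).coeff i = 0)
    (f : PowerSeries K) :
    Sub p hp f = ((pcomp f p : PowerSeries K) : LaurentSeries K) := by
  ext g
  rw [Sub_coeff p hp hp1 f g, PowerSeries.coeff_coe]
  split_ifs with h
  · refine Finset.sum_eq_zero fun n hn => ?_
    rcases Nat.eq_zero_or_pos n with rfl | hn0
    · rw [pow_zero, one_coeff_eq_zero h, mul_zero]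
    · rw [pow_coeff_eq_zero hp1 n g (by omega), mul_zero]
  · push_neg at h
    rw [pcomp, PowerSeries.coeff_mk]
    have hg : (g.natAbs : ℤ) = g := Int.natAbs_of_nonneg h
    have hg2 : g.toNat = g.natAbs := by omega
    rw [hg2]
    refine Finset.sum_congr rfl fun n _ => ?_
    rw [← PowerSeries.coe_pow, PowerSeries.coeff_coe, if_neg (not_lt.2 h)]

set_option synthInstance.maxHeartbeats 1000000 in
theorem Sub_mul (hp1 : ∀ i < (1:ℤ), ((p : LaurentSeries K)).coeff i = 0)
    (f g : PowerSeries K) :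
    Sub p hp (f * g) = Sub p hp f * Sub p hp g := by
  classical
  have hrhs : Sub p hp f * Sub p hp g
      = (HahnSeries.SummableFamily.mul (subFam p hp f) (subFam p hp g)).hsum := by
    rw [HahnSeries.SummableFamily.hsum_mul]
    rfl
  ext c
  set N := c.toNat + 1 with hN
  have hterm : ∀ ij : ℕ × ℕ,
      (HahnSeries.SummableFamily.mul (subFam p hp f) (subFam p hp g)) ij
        = (PowerSeries.coeff ij.1 f * PowerSeries.coeff ij.2 g)
            • ((p : LaurentSeries K) ^ (ij.1 + ij.2)) := by
    intro ij
    rw [HahnSeries.SummableFamily.mul_toFun,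
      subFam_apply, subFam_apply, ← HahnSeries.C_mul_eq_smul, ← HahnSeries.C_mul_eq_smul,
      ← HahnSeries.C_mul_eq_smul, map_mul, _root_.pow_add]
    ring
  have hcos : { ij : ℕ × ℕ |
      ((HahnSeries.SummableFamily.mul (subFam p hp f) (subFam p hp g)) ij).coeff c ≠ 0 }
      ⊆ ↑(Finset.range N ×ˢ Finset.range N) := by
    intro ij hij
    simp only [Set.mem_setOf_eq, hterm, HahnSeries.coeff_smul] at hij
    have h2 := right_ne_zero_of_smul hij
    have h3 : ¬ c < (ij.1 + ij.2 : ℕ) := fun h => h2 (pow_coeff_eq_zero hp1 _ c h)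
    simp only [Finset.coe_product, Set.mem_prod, Finset.mem_coe, Finset.mem_range]
    push_cast at h3
    omega
  rw [hrhs, HahnSeries.SummableFamily.coeff_hsum_eq_sum_of_subset hcos,
    Sub_coeff p hp hp1 _ c]
  have hL : ∀ n ∈ Finset.range N, PowerSeries.coeff n (f * g)
      * ((p : LaurentSeries K) ^ n).coeff c
      = ∑ ij ∈ Finset.HasAntidiagonal.antidiagonal n, PowerSeries.coeff ij.1 f * PowerSeries.coeff ij.2 g
          * ((p : LaurentSeries K) ^ (ij.1 + ij.2)).coeff c := by
    intro n _
    rw [PowerSeries.coeff_mul, Finset.sum_mul]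
    refine Finset.sum_congr rfl fun ij hij => ?_
    rw [Finset.HasAntidiagonal.mem_antidiagonal.1 hij]
  have hR : ∑ ij ∈ Finset.range N ×ˢ Finset.range N,
      ((HahnSeries.SummableFamily.mul (subFam p hp f) (subFam p hp g)) ij).coeff c
      = ∑ ij ∈ Finset.range N ×ˢ Finset.range N,
        PowerSeries.coeff ij.1 f * PowerSeries.coeff ij.2 g
          * ((p : LaurentSeries K) ^ (ij.1 + ij.2)).coeff c := by
    refine Finset.sum_congr rfl fun ij _ => ?_
    rw [hterm, HahnSeries.coeff_smul, smul_eq_mul]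
  rw [hR, Finset.sum_congr rfl hL, ← Finset.sum_biUnion]
  · refine Finset.sum_subset ?_ ?_
    · intro ij hij
      simp only [Finset.mem_biUnion, Finset.mem_range, Finset.HasAntidiagonal.mem_antidiagonal] at hij
      obtain ⟨n, hn, hsum⟩ := hij
      simp only [Finset.mem_product, Finset.mem_range]
      omega
    · intro ij hij hnij
      simp only [Finset.mem_product, Finset.mem_range] at hij
      simp only [Finset.mem_biUnion, Finset.mem_range, Finset.HasAntidiagonal.mem_antidiagonal] at hnij
      have h4 : ¬ (ij.1 + ij.2 < N) := fun h => hnij ⟨ij.1 + ij.2, h, rfl⟩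
      rw [pow_coeff_eq_zero hp1 _ c (by push_cast; omega), mul_zero]
  · intro a _ b _ hab
    simp only [Function.onFun, Finset.disjoint_left]
    intro ij h1 h2
    rw [Finset.HasAntidiagonal.mem_antidiagonal] at h1 h2
    exact hab (h1 ▸ h2.symm ▸ rfl)

theorem Sub_pow (hp1 : ∀ i < (1:ℤ), ((p : LaurentSeries K)).coeff i = 0)
    (f : PowerSeries K) (m : ℕ) :
    Sub p hp (f ^ m) = (Sub p hp f) ^ m := by
  induction m with
  | zero =>
      rw [pow_zero, pow_zero, Sub_eq_coe p hp hp1, pcomp_one', PowerSeries.coe_one]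
  | succ m ih => rw [pow_succ, pow_succ, Sub_mul p hp hp1, ih]

end Subst

theorem eq_X_mul_shift {f : PowerSeries K} (hf : PowerSeries.constantCoeff f = 0) :
    f = PowerSeries.X * PowerSeries.mk (fun m => PowerSeries.coeff (m + 1) f) := by
  ext m
  cases m with
  | zero =>
      rw [PowerSeries.coeff_zero_eq_constantCoeff, hf, map_mul,
        PowerSeries.constantCoeff_X, zero_mul]
  | succ m => rw [PowerSeries.coeff_succ_X_mul, PowerSeries.coeff_mk]

theorem res_base {u v : PowerSeries K} (huv : u * v = 1) :
    ((HahnSeries.single (1:ℤ) (1:K) * (u : LaurentSeries K))⁻¹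
      * D (HahnSeries.single (1:ℤ) (1:K) * (u : LaurentSeries K))).coeff (-1) = 1 := by
  have hXne : (HahnSeries.single (1:ℤ) (1:K)) ≠ 0 := by
    intro h
    have := congrArg (fun x : LaurentSeries K => x.coeff 1) h
    simp at this
  have huvL : (u : LaurentSeries K) * (v : LaurentSeries K) = 1 := by
    rw [← PowerSeries.coe_mul, huv, PowerSeries.coe_one]
  have huLne : (u : LaurentSeries K) ≠ 0 := left_ne_zero_of_mul_eq_one huvL
  have hinv : (u : LaurentSeries K)⁻¹ = (v : LaurentSeries K) :=
    inv_eq_of_mul_eq_one_right huvL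
  have hXinv : (HahnSeries.single (1:ℤ) (1:K))⁻¹ = HahnSeries.single (-1 : ℤ) 1 := by
    refine inv_eq_of_mul_eq_one_right ?_
    rw [HahnSeries.single_mul_single, one_mul]
    norm_num
  have hexp : (HahnSeries.single (1:ℤ) (1:K) * (u : LaurentSeries K))⁻¹
      * D (HahnSeries.single (1:ℤ) (1:K) * (u : LaurentSeries K))
      = (HahnSeries.single (1:ℤ) (1:K))⁻¹
        + (u : LaurentSeries K)⁻¹ * D (u : LaurentSeries K) := by
    rw [D_mul, D_X, one_mul, mul_inv]
    have e1 : (HahnSeries.single (1:ℤ) (1:K))⁻¹ * (u : LaurentSeries K)⁻¹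
        * ((u : LaurentSeries K) + HahnSeries.single (1:ℤ) (1:K) * D (u : LaurentSeries K))
        = (HahnSeries.single (1:ℤ) (1:K))⁻¹ * ((u : LaurentSeries K)⁻¹ * (u : LaurentSeries K))
          + ((HahnSeries.single (1:ℤ) (1:K))⁻¹ * HahnSeries.single (1:ℤ) (1:K))
            * ((u : LaurentSeries K)⁻¹ * D (u : LaurentSeries K)) := by ring
    rw [e1, inv_mul_cancel₀ huLne, inv_mul_cancel₀ hXne, mul_one, one_mul]
  rw [hexp, HahnSeries.coeff_add, hXinv, HahnSeries.coeff_single_same]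
  have h2 : ((u : LaurentSeries K)⁻¹ * D (u : LaurentSeries K)).coeff (-1) = 0 := by
    refine mul_coeff_eq_zero (a := 0) (b := 0) ?_ ?_ (by norm_num)
    · intro i hi
      rw [hinv]
      exact coeff_coe_neg hi
    · intro j hj
      rcases eq_or_ne j (-1) with rfl | hj1
      · rw [coeff_D]
        norm_num
      · rw [coeff_D, coeff_coe_neg (by omega), mul_zero]
  rw [h2, add_zero]

end Scratch

open Scratch

/-- Lagrange inversion: if `q` is the compositional inverse of `p` (both without
constant term, `p` with nonzero linear coefficient), then for all integers `n, k`,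
`n·[x^n](q^k) = k·[x^{n-k}]((x/p)^n)` in the field of Laurent series. -/
theorem lagrange_inversion {K : Type*} [Field K] [CharZero K]
    (p q : PowerSeries K)
    (hp0 : PowerSeries.constantCoeff p = 0)
    (hp1 : PowerSeries.coeff 1 p ≠ 0)
    (hq0 : PowerSeries.constantCoeff q = 0)
    (hqp : pcomp q p = PowerSeries.X)
    (hpq : pcomp p q = PowerSeries.X) :
    ∀ n k : ℤ,
      (n : K) * HahnSeries.coeff ((q : LaurentSeries K) ^ k) n =
        (k : K) * HahnSeries.coeff
          ((((PowerSeries.X : PowerSeries K) : LaurentSeries K) /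
            (p : LaurentSeries K)) ^ n) (n - k) := by
  classical
  intro n k
  have hp1L : ∀ i < (1:ℤ), (p : LaurentSeries K).coeff i = 0 := by
    intro i hi
    rcases eq_or_lt_of_le (show i ≤ 0 by omega) with h | h
    · subst h
      rw [PowerSeries.coeff_coe, if_neg (by norm_num)]
      simpa [PowerSeries.coeff_zero_eq_constantCoeff] using hp0
    · exact coeff_coe_neg h
  have hpne : (p : LaurentSeries K) ≠ 0 := by
    intro h
    refine hp1 ?_
    have h2 := congrArg (fun x : LaurentSeries K => x.coeff (1:ℤ)) h
    simpa [PowerSeries.coeff_coe] using h2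
  have hXne : (HahnSeries.single (1:ℤ) (1:K)) ≠ 0 := by
    intro h
    have h2 := congrArg (fun x : LaurentSeries K => x.coeff 1) h
    simp at h2
  have hp : 0 < (p : LaurentSeries K).orderTop := by
    rw [HahnSeries.zero_lt_orderTop_iff hpne]
    by_contra hle
    push_neg at hle
    exact hpne (HahnSeries.coeff_order_eq_zero.mp (hp1L _ (by omega)))
  -- the coefficient identity  coeff1 p * coeff1 q = 1
  have hcoef1 : PowerSeries.coeff 1 p * PowerSeries.coeff 1 q = 1 := by
    have h := congrArg (PowerSeries.coeff 1) hpq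
    rw [pcomp, PowerSeries.coeff_mk] at h
    simpa [Finset.sum_range_succ, PowerSeries.coeff_one, PowerSeries.coeff_X,
      pow_zero, pow_one] using h
  have hq1 : PowerSeries.coeff 1 q ≠ 0 := right_ne_zero_of_mul_eq_one hcoef1
  -- factor q = X * g
  set g : PowerSeries K := PowerSeries.mk (fun m => PowerSeries.coeff (m + 1) q) with hgdef
  have hqX : q = PowerSeries.X * g := eq_X_mul_shift hq0
  have hgc : PowerSeries.constantCoeff g ≠ 0 := by
    have hg0 : PowerSeries.constantCoeff g = PowerSeries.coeff 1 q := by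
      rw [← PowerSeries.coeff_zero_eq_constantCoeff_apply, hgdef, PowerSeries.coeff_mk]
    rw [hg0]; exact hq1
  set gv : PowerSeries K := PowerSeries.invOfUnit g (Units.mk0 _ hgc) with hgvdef
  have hggv : g * gv = 1 := PowerSeries.mul_invOfUnit g _ rfl
  -- factor p = X * u
  set u : PowerSeries K := PowerSeries.mk (fun m => PowerSeries.coeff (m + 1) p) with hudef
  have hpX : p = PowerSeries.X * u := eq_X_mul_shift hp0
  have huc : PowerSeries.constantCoeff u ≠ 0 := by
    have hu0 : PowerSeries.constantCoeff u = PowerSeries.coeff 1 p := by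
      rw [← PowerSeries.coeff_zero_eq_constantCoeff_apply, hudef, PowerSeries.coeff_mk]
    rw [hu0]; exact hp1
  set v : PowerSeries K := PowerSeries.invOfUnit u (Units.mk0 _ huc) with hvdef
  have huv : u * v = 1 := PowerSeries.mul_invOfUnit u _ rfl
  have hpL2 : (p : LaurentSeries K) = HahnSeries.single (1:ℤ) (1:K) * (u : LaurentSeries K) := by
    calc (p : LaurentSeries K) = ((PowerSeries.X * u : PowerSeries K) : LaurentSeries K) := by
          rw [← hpX]
      _ = HahnSeries.single (1:ℤ) (1:K) * (u : LaurentSeries K) := by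
          rw [PowerSeries.coe_mul, PowerSeries.coe_X]
  have hres1 : ((p : LaurentSeries K)⁻¹ * D (p : LaurentSeries K)).coeff (-1) = 1 := by
    rw [hpL2]; exact res_base huv
  -- substitution facts
  have hSq : Sub p hp q = HahnSeries.single (1:ℤ) (1:K) := by
    rw [Sub_eq_coe p hp hp1L, hqp, PowerSeries.coe_X]
  have hSX : Sub p hp PowerSeries.X = (p : LaurentSeries K) := by
    rw [Sub_eq_coe p hp hp1L, pcomp_X' p hp0]
  have hS1 : Sub p hp 1 = 1 := by
    rw [Sub_eq_coe p hp hp1L, pcomp_one', PowerSeries.coe_one]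
  have hkey : Sub p hp g * (p : LaurentSeries K) = HahnSeries.single (1:ℤ) (1:K) := by
    rw [← hSX, ← Sub_mul p hp hp1L, mul_comm g PowerSeries.X, ← hqX, hSq]
  have hSgne : Sub p hp g ≠ 0 := by
    intro h
    exact hXne (by rw [← hkey, h, zero_mul])
  have hSgv : Sub p hp gv = (Sub p hp g)⁻¹ := by
    have h1 : Sub p hp g * Sub p hp gv = 1 := by
      rw [← Sub_mul p hp hp1L, hggv, hS1]
    exact (inv_eq_of_mul_eq_one_right h1).symm
  -- gk
  set gk : PowerSeries K := if 0 ≤ k then g ^ k.toNat else gv ^ (-k).toNat with hgkdef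
  have hSgk : Sub p hp gk = (Sub p hp g) ^ k := by
    rcases le_or_gt 0 k with hk | hk
    · rw [hgkdef, if_pos hk, Sub_pow p hp hp1L, ← zpow_natCast, Int.toNat_of_nonneg hk]
    · rw [hgkdef, if_neg (not_le.2 hk), Sub_pow p hp hp1L, hSgv, ← zpow_natCast,
        inv_zpow, Int.toNat_of_nonneg (by omega), ← zpow_neg, neg_neg]
  have hgvL : ((g : PowerSeries K) : LaurentSeries K)⁻¹ = (gv : LaurentSeries K) := by
    refine inv_eq_of_mul_eq_one_right ?_
    rw [← PowerSeries.coe_mul, hggv, PowerSeries.coe_one]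
  have hgLk : ((g : PowerSeries K) : LaurentSeries K) ^ k = (gk : LaurentSeries K) := by
    rcases le_or_gt 0 k with hk | hk
    · rw [hgkdef, if_pos hk, PowerSeries.coe_pow, ← zpow_natCast, Int.toNat_of_nonneg hk]
    · rw [hgkdef, if_neg (not_le.2 hk), PowerSeries.coe_pow, ← hgvL, ← zpow_natCast,
        inv_zpow, Int.toNat_of_nonneg (by omega), ← zpow_neg, neg_neg]
  have hqL : (q : LaurentSeries K) = HahnSeries.single (1:ℤ) (1:K) * (g : LaurentSeries K) := by
    calc (q : LaurentSeries K) = ((PowerSeries.X * g : PowerSeries K) : LaurentSeries K) := by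
          rw [← hqX]
      _ = _ := by rw [PowerSeries.coe_mul, PowerSeries.coe_X]
  have hAn : ∀ m : ℤ, ((q : LaurentSeries K) ^ k).coeff m = (gk : LaurentSeries K).coeff (m - k) := by
    intro m
    rw [hqL, mul_zpow, hgLk, single_zpow, single_mul_coeff']
  -- case n = 0
  rcases eq_or_ne n 0 with rfl | hn0
  · rcases eq_or_ne k 0 with rfl | hk0
    · norm_num
    · rw [zpow_zero, Int.cast_zero, zero_mul, HahnSeries.coeff_one, if_neg (by omega), mul_zero]
  -- main case
  have hMain : (HahnSeries.single (1:ℤ) (1:K)) ^ k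
      = Sub p hp gk * (p : LaurentSeries K) ^ k := by
    rw [hSgk, ← mul_zpow, hkey]
  set c : LaurentSeries K := (p : LaurentSeries K) ^ (-n - 1 : ℤ) * D (p : LaurentSeries K)
    with hcdef
  set w : LaurentSeries K := (p : LaurentSeries K) ^ (k : ℤ) * c with hwdef
  have hterm : ∀ m : ℕ, ((w • subFam p hp gk) m).coeff (-1)
      = if (m : ℤ) = n - k then PowerSeries.coeff m gk else 0 := by
    intro m
    rw [HahnSeries.SummableFamily.smul_apply, HahnSeries.of_symm_smul_of_eq_mul,
      subFam_apply, ← HahnSeries.C_mul_eq_smul]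
    have e : w * (HahnSeries.C (PowerSeries.coeff m gk) * (p : LaurentSeries K) ^ m)
        = HahnSeries.C (PowerSeries.coeff m gk) * (w * (p : LaurentSeries K) ^ m) := by ring
    rw [e, HahnSeries.C_mul_eq_smul, HahnSeries.coeff_smul, smul_eq_mul]
    have e2 : w * (p : LaurentSeries K) ^ m
        = (p : LaurentSeries K) ^ ((m + k - n : ℤ) - 1) * D (p : LaurentSeries K) := by
      rw [hwdef, hcdef, ← zpow_natCast (p : LaurentSeries K) m]
      rw [show (p : LaurentSeries K) ^ (k:ℤ) * ((p : LaurentSeries K) ^ (-n - 1 : ℤ)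
          * D (p : LaurentSeries K)) * (p : LaurentSeries K) ^ (m:ℤ)
        = (p : LaurentSeries K) ^ (k:ℤ) * (p : LaurentSeries K) ^ (-n - 1 : ℤ)
          * (p : LaurentSeries K) ^ (m:ℤ) * D (p : LaurentSeries K) from by ring,
        ← zpow_add₀ hpne, ← zpow_add₀ hpne]
      congr 2
      ring
    rw [e2]
    rcases eq_or_ne ((m : ℤ)) (n - k) with he | he
    · rw [if_pos he]
      have e3 : ((m : ℤ) + k - n : ℤ) - 1 = -1 := by omega
      rw [e3, zpow_neg_one, hres1, mul_one]
    · rw [if_neg he, res_zpow_D hpne (t := (m : ℤ) + k - n) (by omega), mul_zero]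
  have hE1 : ((HahnSeries.single (1:ℤ) (1:K)) ^ k * c).coeff (-1)
      = ((q : LaurentSeries K) ^ k).coeff n := by
    have h1 : (HahnSeries.single (1:ℤ) (1:K)) ^ k * c = (w • subFam p hp gk).hsum := by
      rw [HahnSeries.SummableFamily.hsum_smul]
      rw [show (subFam p hp gk).hsum = Sub p hp gk from rfl, hMain, hwdef]
      ring
    rw [h1, HahnSeries.SummableFamily.coeff_hsum, finsum_congr hterm, hAn n]
    rcases le_or_gt 0 (n - k) with hnk | hnk
    · rw [finsum_eq_single _ ((n - k).toNat) (fun b hb => if_neg (by omega)),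
        if_pos (by omega), PowerSeries.coeff_coe, if_neg (not_lt.2 hnk)]
      have hna : (n - k).natAbs = (n - k).toNat := by omega
      rw [hna]
    · rw [finsum_eq_zero_of_forall_eq_zero (fun m => if_neg (by omega)),
        PowerSeries.coeff_coe, if_pos hnk]
  have hE3 : (n : K) * ((HahnSeries.single (1:ℤ) (1:K)) ^ k * c).coeff (-1)
      = (k : K) * ((p : LaurentSeries K) ^ (-n : ℤ)).coeff (-k) := by
    have hD := D_mul ((HahnSeries.single (1:ℤ) (1:K)) ^ k) ((p : LaurentSeries K) ^ (-n : ℤ))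
    have h2 : D ((HahnSeries.single (1:ℤ) (1:K)) ^ k)
        = HahnSeries.C (k : K) * (HahnSeries.single (1:ℤ) (1:K)) ^ (k - 1) := by
      rw [D_zpow _ hXne k, D_X, mul_one, ← HahnSeries.C_mul_eq_smul]
    have h3 : D ((p : LaurentSeries K) ^ (-n : ℤ))
        = HahnSeries.C ((-n : ℤ) : K) * c := by
      rw [D_zpow _ hpne (-n), ← HahnSeries.C_mul_eq_smul, hcdef]
    have h4 := congrArg (fun x : LaurentSeries K => x.coeff (-1)) hD
    simp only [res_D] at h4
    rw [h2, h3] at h4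
    rw [show HahnSeries.C (k:K) * (HahnSeries.single (1:ℤ) (1:K)) ^ (k - 1)
        * (p : LaurentSeries K) ^ (-n : ℤ)
      = HahnSeries.C (k:K) * ((HahnSeries.single (1:ℤ) (1:K)) ^ (k - 1)
        * (p : LaurentSeries K) ^ (-n : ℤ)) from by ring,
      show HahnSeries.single (1:ℤ) (1:K) ^ k * (HahnSeries.C ((-n : ℤ):K) * c)
      = HahnSeries.C ((-n : ℤ):K) * ((HahnSeries.single (1:ℤ) (1:K)) ^ k * c) from by ring]
      at h4
    rw [HahnSeries.coeff_add, HahnSeries.C_mul_eq_smul, HahnSeries.C_mul_eq_smul,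
      HahnSeries.coeff_smul, HahnSeries.coeff_smul, smul_eq_mul, smul_eq_mul] at h4
    have h5 : ((HahnSeries.single (1:ℤ) (1:K)) ^ (k - 1)
        * (p : LaurentSeries K) ^ (-n : ℤ)).coeff (-1)
        = ((p : LaurentSeries K) ^ (-n : ℤ)).coeff (-k) := by
      rw [single_zpow, single_mul_coeff']
      congr 1
      ring
    rw [h5] at h4
    push_cast at h4 ⊢
    linear_combination h4
  have hRHS : ((((PowerSeries.X : PowerSeries K) : LaurentSeries K) /
      (p : LaurentSeries K)) ^ n).coeff (n - k)
      = ((p : LaurentSeries K) ^ (-n : ℤ)).coeff (-k) := by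
    rw [PowerSeries.coe_X, div_zpow, div_eq_mul_inv, ← zpow_neg, single_zpow,
      single_mul_coeff']
    congr 1
    ring
  rw [hRHS, ← hE1]
  exact hE3
end

section
/- Let s(x) be a formal power series with s(0) ≠ 0 and q(t) the unique power series with q(0)=0 satisfying q(t) = t·s(q(t)). Then q(t) = Σ_{n≥1} (t^n/n)·[x^{n-1}](s(x)^n). -/
open PowerSeries

open Finset

namespace LagrangeAux

variable {K : Type*} [CommRing K]

lemma coeff_pcomp (f g : PowerSeries K) (N : ℕ) :
    coeff N (pcomp f g) = ∑ k ∈ range (N + 1), coeff k f * coeff N (g ^ k) := by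
  simp [pcomp, coeff_mk]

lemma coeff_pcomp_of_le {q : PowerSeries K}
    (hord : ∀ j k : ℕ, j < k → coeff j (q ^ k) = 0)
    (f : PowerSeries K) {i N : ℕ} (h : i ≤ N) :
    coeff i (pcomp f q) = ∑ k ∈ range (N + 1), coeff k f * coeff i (q ^ k) := by
  rw [coeff_pcomp]
  apply Finset.sum_subset
  · exact range_subset_range.mpr (by omega)
  · intro k hk hk2
    simp only [mem_range] at hk hk2
    rw [hord i k (by omega), mul_zero]

lemma triangle {M : Type*} [AddCommMonoid M] (N : ℕ) (g : ℕ → ℕ → M)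
    (hg : ∀ k l, N < k + l → g k l = 0) :
    ∑ m ∈ range (N + 1), ∑ p ∈ Finset.HasAntidiagonal.antidiagonal m, g p.1 p.2
      = ∑ k ∈ range (N + 1), ∑ l ∈ range (N + 1), g k l := by
  rw [← Finset.sum_biUnion]
  · rw [← Finset.sum_product']
    apply Finset.sum_subset
    · intro p hp
      simp only [Finset.mem_biUnion, Finset.HasAntidiagonal.mem_antidiagonal, mem_range] at hp
      obtain ⟨m, hm, hpm⟩ := hp
      simp only [mem_product, mem_range]
      omega
    · intro p _ hp2
      apply hg
      by_contra h
      push_neg at h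
      exact hp2 (Finset.mem_biUnion.mpr
        ⟨p.1 + p.2, mem_range.mpr (by omega), Finset.HasAntidiagonal.mem_antidiagonal.mpr rfl⟩)
  · intro x _ y _ hxy
    apply Finset.disjoint_left.mpr
    intro p hp hp2
    rw [Finset.HasAntidiagonal.mem_antidiagonal] at hp hp2
    exact hxy (by omega)

lemma pcomp_mul {q : PowerSeries K}
    (hord : ∀ j k : ℕ, j < k → coeff j (q ^ k) = 0)
    (a b : PowerSeries K) : pcomp (a * b) q = pcomp a q * pcomp b q := by
  ext N
  have key : ∀ k l : ℕ, N < k + l →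
      coeff k a * coeff l b * coeff N (q ^ (k + l)) = 0 := by
    intro k l h; rw [hord N (k + l) h, mul_zero]
  have lhs : coeff N (pcomp (a * b) q)
      = ∑ k ∈ range (N + 1), ∑ l ∈ range (N + 1),
          coeff k a * coeff l b * coeff N (q ^ (k + l)) := by
    rw [coeff_pcomp, ← triangle N _ key]
    refine Finset.sum_congr rfl fun m _ => ?_
    rw [coeff_mul, Finset.sum_mul]
    refine Finset.sum_congr rfl fun p hp => ?_
    rw [Finset.HasAntidiagonal.mem_antidiagonal.mp hp]
  rw [lhs, coeff_mul]
  have rhs : ∀ p ∈ Finset.HasAntidiagonal.antidiagonal N,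
      coeff p.1 (pcomp a q) * coeff p.2 (pcomp b q)
        = ∑ k ∈ range (N + 1), ∑ l ∈ range (N + 1),
            (coeff k a * coeff p.1 (q ^ k)) * (coeff l b * coeff p.2 (q ^ l)) := by
    intro p hp
    rw [Finset.HasAntidiagonal.mem_antidiagonal] at hp
    rw [coeff_pcomp_of_le hord a (show p.1 ≤ N by omega),
        coeff_pcomp_of_le hord b (show p.2 ≤ N by omega), Finset.sum_mul_sum]
  rw [Finset.sum_congr rfl rhs]
  conv_rhs => rw [Finset.sum_comm]
  refine Finset.sum_congr rfl fun k _ => ?_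
  conv_rhs => rw [Finset.sum_comm]
  refine Finset.sum_congr rfl fun l _ => ?_
  rw [pow_add, coeff_mul, Finset.mul_sum]
  refine Finset.sum_congr rfl fun p _ => by ring

lemma pcomp_one (q : PowerSeries K) : pcomp 1 q = 1 := by
  ext N
  rw [coeff_pcomp]
  simp [coeff_one, ite_mul, Finset.sum_ite_eq']

lemma pcomp_pow {q : PowerSeries K}
    (hord : ∀ j k : ℕ, j < k → coeff j (q ^ k) = 0)
    (a : PowerSeries K) (n : ℕ) : pcomp (a ^ n) q = pcomp a q ^ n := by
  induction n with
  | zero => simpa using pcomp_one q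
  | succ n ih => rw [pow_succ, pow_succ, pcomp_mul hord, ih]

end LagrangeAux
namespace LagrangeAux

lemma coeff_pcomp_mul {K : Type*} [CommRing K] {q : PowerSeries K}
    (hord : ∀ j k : ℕ, j < k → coeff j (q ^ k) = 0)
    (F g : PowerSeries K) (N : ℕ) :
    coeff N (pcomp F q * g) = ∑ k ∈ range (N + 1), coeff k F * coeff N (q ^ k * g) := by
  rw [coeff_mul]
  have h : ∀ p ∈ Finset.HasAntidiagonal.antidiagonal N, coeff p.1 (pcomp F q) * coeff p.2 g
      = ∑ k ∈ range (N + 1), coeff k F * coeff p.1 (q ^ k) * coeff p.2 g := by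
    intro p hp
    rw [Finset.HasAntidiagonal.mem_antidiagonal] at hp
    rw [coeff_pcomp_of_le hord F (show p.1 ≤ N by omega), Finset.sum_mul]
  rw [Finset.sum_congr rfl h]
  conv_lhs => rw [Finset.sum_comm]
  refine Finset.sum_congr rfl fun k _ => ?_
  rw [coeff_mul, Finset.mul_sum]
  refine Finset.sum_congr rfl fun p _ => by ring

lemma core {K : Type*} [Field K] [CharZero K] {u w : PowerSeries K} (huw : u * w = 1) (m : ℕ) :
    coeff m (w ^ (m + 1) * d⁄dX K (X * u)) = if m = 0 then 1 else 0 := by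
  have hdq : d⁄dX K (X * u) = X * d⁄dX K u + u := by
    rw [Derivation.leibniz, derivative_X, smul_eq_mul, smul_eq_mul, mul_one]
  have hwu : ∀ i : ℕ, w ^ (i + 1) * u = w ^ i := fun i => by
    rw [pow_succ, mul_assoc, mul_comm w u, huw, mul_one]
  have h0 : u * d⁄dX K w + w * d⁄dX K u = 0 := by
    have h := congrArg (d⁄dX K) huw
    rwa [Derivation.leibniz, Derivation.map_one_eq_zero, smul_eq_mul, smul_eq_mul] at h
  rw [hdq, mul_add, hwu m]
  cases m with
  | zero =>
    rw [if_pos rfl]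
    simp [coeff_zero_eq_constantCoeff]
  | succ j =>
    rw [if_neg (Nat.succ_ne_zero j), map_add]
    have hkey : w ^ (j + 1 + 1) * (X * d⁄dX K u) = X * (-(w ^ j * d⁄dX K w)) := by
      have hwdu : w * d⁄dX K u = -(u * d⁄dX K w) := by linear_combination h0
      calc w ^ (j + 1 + 1) * (X * d⁄dX K u)
          = X * (w ^ (j + 1) * (w * d⁄dX K u)) := by ring
        _ = X * (w ^ (j + 1) * (-(u * d⁄dX K w))) := by rw [hwdu]
        _ = X * (-((w ^ (j + 1) * u) * d⁄dX K w)) := by ring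
        _ = X * (-(w ^ j * d⁄dX K w)) := by rw [hwu j]
    rw [hkey, coeff_succ_X_mul, map_neg]
    have hpow : d⁄dX K (w ^ (j + 1)) = (j + 1) • (w ^ j * d⁄dX K w) := by
      rw [Derivation.leibniz_pow, Nat.add_sub_cancel, smul_eq_mul]
    have key2 : coeff j (w ^ j * d⁄dX K w) = coeff (j + 1) (w ^ (j + 1)) := by
      have h := coeff_derivative (w ^ (j + 1)) j
      rw [hpow, map_nsmul, nsmul_eq_mul] at h
      have hne : ((j : K) + 1) ≠ 0 := Nat.cast_add_one_ne_zero j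
      apply mul_left_cancel₀ hne
      push_cast at h ⊢
      linear_combination h
    rw [key2]
    ring

end LagrangeAux

/-- Lagrange inversion: if `q(0) = 0` and `q = t·s(q)` with `s(0) ≠ 0`, then
`q(t) = Σ_{n≥1} (t^n/n)·[x^{n-1}](s^n)`, i.e. `[t^n] q = (1/n)·[x^{n-1}](s^n)` for `n ≥ 1`. -/
theorem lagrange_series {K : Type*} [Field K] [CharZero K]
    (s q : PowerSeries K)
    (hs : PowerSeries.constantCoeff s ≠ 0)
    (hq0 : PowerSeries.constantCoeff q = 0)
    (hq : q = PowerSeries.X * pcomp s q) :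
    ∀ n : ℕ, 1 ≤ n →
      PowerSeries.coeff n q = (n : K)⁻¹ * PowerSeries.coeff (n - 1) (s ^ n) := by
  intro n hn
  set u : PowerSeries K := pcomp s q with hu
  have hqu : q = X * u := hq
  have hXdvd : (X : PowerSeries K) ∣ q := ⟨u, hqu⟩
  have hord : ∀ j k : ℕ, j < k → coeff j (q ^ k) = 0 := fun j k hjk =>
    X_pow_dvd_iff.mp (pow_dvd_pow_of_dvd hXdvd k) j hjk
  have hu0 : constantCoeff u ≠ 0 := by
    have h0 : constantCoeff u = constantCoeff s := by
      rw [← coeff_zero_eq_constantCoeff, hu, LagrangeAux.coeff_pcomp]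
      simp
    rw [h0]; exact hs
  set w : PowerSeries K := u⁻¹ with hw
  have huw : u * w = 1 := PowerSeries.mul_inv_cancel u hu0
  set N := n - 1 with hN
  have hnN : n = N + 1 := by omega
  have hq' : d⁄dX K q = u ^ n * (w ^ n * d⁄dX K q) := by
    rw [← mul_assoc, ← mul_pow, huw, one_pow, one_mul]
  have hpowc : pcomp (s ^ n) q = u ^ n := LagrangeAux.pcomp_pow hord s n
  have hterm : ∀ k ∈ range (N + 1),
      coeff k (s ^ n) * coeff N (q ^ k * (w ^ n * d⁄dX K q))
        = coeff k (s ^ n) * (if k = N then 1 else 0) := by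
    intro k hk
    rw [mem_range] at hk
    congr 1
    have e1 : q ^ k * (w ^ n * d⁄dX K q) = X ^ k * (w ^ (n - k) * d⁄dX K q) := by
      have e2 : w ^ n = w ^ k * w ^ (n - k) := by rw [← pow_add]; congr 1; omega
      calc q ^ k * (w ^ n * d⁄dX K q)
          = (X * u) ^ k * (w ^ k * w ^ (n - k) * d⁄dX K q) := by rw [← hqu, ← e2]
        _ = X ^ k * ((u * w) ^ k * (w ^ (n - k) * d⁄dX K q)) := by ring
        _ = X ^ k * (w ^ (n - k) * d⁄dX K q) := by rw [huw, one_pow, one_mul]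
    rw [e1, coeff_X_pow_mul' _ _ _, if_pos (by omega : k ≤ N)]
    have e3 : n - k = (N - k) + 1 := by omega
    rw [e3, hqu]
    rw [LagrangeAux.core huw (N - k)]
    by_cases hkN : k = N
    · rw [if_pos hkN, if_pos (by omega)]
    · rw [if_neg (by omega), if_neg hkN]
  have hmain : coeff N (d⁄dX K q) = coeff N (s ^ n) := by
    conv_lhs => rw [hq', ← hpowc]
    rw [LagrangeAux.coeff_pcomp_mul hord, Finset.sum_congr rfl hterm]
    simp only [mul_ite, mul_one, mul_zero]
    rw [Finset.sum_ite_eq' (range (N + 1)) N (fun k => coeff k (s ^ n)),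
      if_pos (mem_range.mpr (by omega))]
  have hd : coeff N (d⁄dX K q) = coeff n q * (n : K) := by
    rw [coeff_derivative, ← hnN, hnN]
    push_cast
    ring
  have hfin : coeff n q * (n : K) = coeff N (s ^ n) := by rw [← hd, hmain]
  have hne : (n : K) ≠ 0 := Nat.cast_ne_zero.mpr (by omega)
  field_simp
  linear_combination hfin
end

section
/- Let s(x) be a formal power series over a field of characteristic zero with s_0 ≠ 0. Define polynomials P_k by P_1(x) = s_0 and P_k(x) = truncation to degree k-1 of P_{k-1}(x)·s(x). Let Q_n(0) = [x^{n-1}]P_n(x) be the top coefficient, and set q(t) = Σ_{n≥1} Q_n(0) t^n. Then q(t) = t·s(q(t)). -/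
open PowerSeries

/-- Let `s` be a power series with `s(0) ≠ 0`, `P₁ = s₀`, and
`P_k = ⌊P_{k-1}·s⌋_k` (truncation to degree < k). If `q(t) = Σ_{n≥1} ([x^{n-1}]P_n)·t^n`,
then `q = t·s(q)`. -/
theorem truncation_top_coeffs_reversion {K : Type*} [Field K] [CharZero K]
    (s : PowerSeries K) (hs : PowerSeries.constantCoeff s ≠ 0)
    (P : ℕ → Polynomial K)
    (hP1 : P 1 = Polynomial.C (PowerSeries.constantCoeff s))
    (hPrec : ∀ k, 2 ≤ k → P k = PowerSeries.trunc k ((P (k - 1) : PowerSeries K) * s))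
    (q : PowerSeries K)
    (hq0 : PowerSeries.constantCoeff q = 0)
    (hq : ∀ n, 1 ≤ n → PowerSeries.coeff n q = (P n).coeff (n - 1)) :
    q = PowerSeries.X * pcomp s q := by
  classical
  -- powers of q have order at least the exponent
  have hord : ∀ d t : ℕ, t < d → PowerSeries.coeff t (q ^ d) = 0 := by
    intro d t ht
    have hx : (PowerSeries.X : PowerSeries K) ∣ q := PowerSeries.X_dvd_iff.mpr hq0
    have hxd : (PowerSeries.X : PowerSeries K) ^ d ∣ q ^ d := pow_dvd_pow_of_dvd hx d
    exact (PowerSeries.X_pow_dvd_iff.mp hxd) t ht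
  -- coefficient of a product of the composition with a power of q
  have hLcomp : ∀ n e : ℕ, PowerSeries.coeff n (pcomp s q * q ^ e)
      = ∑ d ∈ Finset.range (n + 1),
          PowerSeries.coeff d s * PowerSeries.coeff n (q ^ (e + d)) := by
    intro n e
    rw [PowerSeries.coeff_mul]
    have step : ∀ p ∈ Finset.HasAntidiagonal.antidiagonal n,
        PowerSeries.coeff p.1 (pcomp s q) * PowerSeries.coeff p.2 (q ^ e)
        = ∑ d ∈ Finset.range (n + 1),
            PowerSeries.coeff d s *
              (PowerSeries.coeff p.1 (q ^ d) * PowerSeries.coeff p.2 (q ^ e)) := by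
      intro p hp
      have hp1 : p.1 ≤ n := Finset.HasAntidiagonal.antidiagonal.fst_le hp
      rw [pcomp, PowerSeries.coeff_mk, Finset.sum_mul]
      rw [Finset.sum_subset (Finset.range_subset_range.mpr (by omega) :
            Finset.range (p.1 + 1) ⊆ Finset.range (n + 1))
          (fun d hd hnd => by
            have hlt : p.1 < d := by
              simp only [Finset.mem_range] at hd hnd; omega
            rw [hord d p.1 hlt, mul_zero, zero_mul])]
      exact Finset.sum_congr rfl fun d _ => by ring
    rw [Finset.sum_congr rfl step, Finset.sum_comm]
    refine Finset.sum_congr rfl fun d _ => ?_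
    rw [← Finset.mul_sum, ← PowerSeries.coeff_mul, ← pow_add, add_comm d e]
  -- the main simultaneous induction
  have key : ∀ k : ℕ, 1 ≤ k →
      (PowerSeries.coeff k q = PowerSeries.coeff k (PowerSeries.X * pcomp s q)) ∧
      (∀ j : ℕ, (P k).coeff j = PowerSeries.coeff k (q ^ (k - j))) := by
    intro k
    induction k using Nat.strong_induction_on with
    | _ k ih =>
      intro hk
      constructor
      · -- part 1 : coefficient identity at k
        obtain ⟨k, rfl⟩ : ∃ k', k = k' + 1 := ⟨k - 1, by omega⟩
        rw [PowerSeries.coeff_succ_X_mul, pcomp, PowerSeries.coeff_mk, hq (k + 1) hk]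
        rcases Nat.eq_zero_or_pos k with rfl | hk2
        · simp [hP1, PowerSeries.coeff_zero_eq_constantCoeff]
        · -- k + 1 ≥ 2
          have h2 : 2 ≤ k + 1 := by omega
          rw [hPrec (k + 1) h2]
          simp only [Nat.add_sub_cancel]
          rw [PowerSeries.coeff_trunc]
          rw [if_pos (by omega : k < k + 1)]
          rw [PowerSeries.coeff_mul]
          rw [Finset.Nat.sum_antidiagonal_eq_sum_range_succ_mk]
          have hih := (ih k (by omega) (by omega)).2
          rw [← Finset.sum_range_reflect
            (fun d => PowerSeries.coeff d s * PowerSeries.coeff k (q ^ d)) (k + 1)]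
          refine Finset.sum_congr rfl fun i hi => ?_
          have hi' : i ≤ k := Nat.lt_succ_iff.mp (Finset.mem_range.mp hi)
          simp only [Nat.add_sub_cancel]
          rw [Polynomial.coeff_coe, hih i]
          ring
      · -- part 2 : coefficients of P k
        intro j
        rcases lt_or_ge j k with hjk | hjk
        · rcases Nat.eq_or_lt_of_le (Nat.succ_le_of_lt hjk) with htop | hlow
          · -- j = k - 1 : top coefficient, this is hq
            have hj : j = k - 1 := by omega
            subst hj
            have : k - (k - 1) = 1 := by omega
            rw [this, pow_one]
            exact (hq k hk).symm
          · -- j ≤ k - 2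
            have h2 : 2 ≤ k := by omega
            set m := k - j with hm
            have hm2 : 2 ≤ m := by omega
            -- LHS
            rw [hPrec k h2, PowerSeries.coeff_trunc, if_pos hjk, PowerSeries.coeff_mul,
              Finset.Nat.sum_antidiagonal_eq_sum_range_succ_mk]
            have hih := (ih (k - 1) (by omega) (by omega)).2
            have hL : ∑ i ∈ Finset.range (j + 1),
                PowerSeries.coeff i ((P (k - 1) : PowerSeries K)) *
                  PowerSeries.coeff (j - i) s
                = ∑ d ∈ Finset.range (j + 1),
                    PowerSeries.coeff d s *
                      PowerSeries.coeff (k - 1) (q ^ (m - 1 + d)) := by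
              rw [← Finset.sum_range_reflect
                (fun d => PowerSeries.coeff d s *
                  PowerSeries.coeff (k - 1) (q ^ (m - 1 + d))) (j + 1)]
              refine Finset.sum_congr rfl fun i hi => ?_
              have hi' : i ≤ j := Nat.lt_succ_iff.mp (Finset.mem_range.mp hi)
              simp only [Nat.add_sub_cancel]
              rw [Polynomial.coeff_coe, hih i]
              have he : m - 1 + (j - i) = k - 1 - i := by omega
              rw [he]
              ring
            rw [hL]
            -- RHS : coeff k (q ^ m)
            have hqm : q ^ m = q * q ^ (m - 1) := by
              conv_lhs => rw [show m = 1 + (m - 1) by omega, pow_add, pow_one]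
            rw [hqm, PowerSeries.coeff_mul]
            -- replace q by X * pcomp s q termwise
            have hA : ∀ t : ℕ, t ≤ k - 1 →
                PowerSeries.coeff t q =
                  PowerSeries.coeff t (PowerSeries.X * pcomp s q) := by
              intro t ht
              rcases Nat.eq_zero_or_pos t with rfl | ht1
              · rw [PowerSeries.coeff_zero_eq_constantCoeff, hq0, map_mul]
                simp
              · exact (ih t (by omega) ht1).1
            have hterm : ∀ p ∈ Finset.HasAntidiagonal.antidiagonal k,
                PowerSeries.coeff p.1 q * PowerSeries.coeff p.2 (q ^ (m - 1))
                = PowerSeries.coeff p.1 (PowerSeries.X * pcomp s q) *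
                    PowerSeries.coeff p.2 (q ^ (m - 1)) := by
              intro p hp
              have hpsum : p.1 + p.2 = k := Finset.HasAntidiagonal.mem_antidiagonal.mp hp
              rcases Nat.eq_zero_or_pos p.2 with h0 | h0
              · have hz : PowerSeries.coeff p.2 (q ^ (m - 1)) = 0 := by
                  rw [h0]; exact hord (m - 1) 0 (by omega)
                rw [hz, mul_zero, mul_zero]
              · have hple : p.1 ≤ k - 1 := by omega
                rw [hA p.1 hple]
            rw [Finset.sum_congr rfl hterm, ← PowerSeries.coeff_mul, mul_assoc,
              show k = (k - 1) + 1 by omega, PowerSeries.coeff_succ_X_mul,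
              hLcomp (k - 1) (m - 1)]
            -- extend the sum from range (j+1) to range k
            rw [show k - 1 + 1 = k by omega]
            refine Finset.sum_subset (Finset.range_subset_range.mpr (by omega)) ?_
            intro d hd hnd
            have hdj : j < d := by
              simp only [Finset.mem_range] at hd hnd; omega
            rw [hord (m - 1 + d) (k - 1) (by omega), mul_zero]
        · -- j ≥ k : both sides vanish
          have hkj : k - j = 0 := by omega
          rw [hkj, pow_zero, PowerSeries.coeff_one, if_neg (by omega : ¬ k = 0)]
          rcases Nat.eq_or_lt_of_le hk with h1 | h2
          · rw [← h1, hP1, Polynomial.coeff_C, if_neg (by omega : ¬ j = 0)]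
          · rw [hPrec k h2, PowerSeries.coeff_trunc, if_neg (by omega : ¬ j < k)]
  ext n
  rcases Nat.eq_zero_or_pos n with rfl | hn
  · rw [PowerSeries.coeff_zero_eq_constantCoeff, hq0, map_mul]
    simp
  · exact (key n hn).1
end

section
/- With P_k defined by P_1 = s_0, P_k = ⌊P_{k-1}·s⌋_k, define the reflected polynomials Q_n(x) = x^{n-1}·P_n(1/x) and q(t) = Σ_{n≥1} Q_n(0) t^n. Then Σ_{n≥1} Q_n(x) t^n = q(t)/(1 − x·q(t)) as a formal power series in t with polynomial coefficients in x. -/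
open PowerSeries Finset

/-- With `P₁ = s₀`, `P_k = ⌊P_{k-1}·s⌋_k`, the reflected polynomials
`Q_n(x) = x^{n-1}·P_n(1/x)` and `q(t) = Σ_{n≥1} Q_n(0)·t^n` satisfy
`Σ_{n≥1} Q_n(x)·t^n = q(t)/(1 − x·q(t))`, i.e.
`(Σ_{n≥1} Q_n(x)·t^n)·(1 − x·q(t)) = q(t)` as power series in `t` with
polynomial coefficients in `x`. -/
theorem reflected_truncations_generating_function {K : Type*} [Field K] [CharZero K]
    (s : PowerSeries K) (hs : PowerSeries.constantCoeff (R := K) s ≠ 0)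
    (P : ℕ → Polynomial K)
    (hP1 : P 1 = Polynomial.C (PowerSeries.constantCoeff (R := K) s))
    (hPrec : ∀ k, 2 ≤ k → P k = PowerSeries.trunc k ((P (k - 1) : PowerSeries K) * s))
    (q : PowerSeries K)
    (hq0 : PowerSeries.constantCoeff (R := K) q = 0)
    (hq : ∀ n, 1 ≤ n → PowerSeries.coeff (R := K) n q = (P n).coeff (n - 1))
    (Qser : PowerSeries (Polynomial K))
    (hQ0 : PowerSeries.constantCoeff (R := Polynomial K) Qser = 0)
    (hQ : ∀ n, 1 ≤ n →
      PowerSeries.coeff (R := Polynomial K) n Qser = Polynomial.reflect (n - 1) (P n)) :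
    Qser * (1 - PowerSeries.C (R := Polynomial K) Polynomial.X *
        PowerSeries.map (Polynomial.C : K →+* Polynomial K) q) =
      PowerSeries.map (Polynomial.C : K →+* Polynomial K) q := by
  classical
  -- triangular sum swap
  have swap : ∀ (f : ℕ → ℕ → K) (m : ℕ),
      ∑ i ∈ range (m+1), ∑ r ∈ range (i+1), f i r
        = ∑ r ∈ range (m+1), ∑ i ∈ range (m+1-r), f (i+r) r := by
    intro f m
    rw [Finset.sum_comm' (t' := range (m+1)) (s' := fun r => Ico r (m+1))
      (fun i r => by simp only [mem_range, mem_Ico]; omega)]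
    refine Finset.sum_congr rfl fun r hr => ?_
    rw [Finset.sum_Ico_eq_sum_range]
    exact Finset.sum_congr rfl fun i hi => by rw [Nat.add_comm r i]
  set R : ℕ → Polynomial K := fun n => if n = 0 then 1 else P n with hRdef
  have hR0 : R 0 = 1 := by simp [hRdef]
  have hRn : ∀ n, 1 ≤ n → R n = P n := by
    intro n hn; simp [hRdef, Nat.one_le_iff_ne_zero.mp hn]
  -- degree bound
  have hdeg : ∀ n m : ℕ, 1 ≤ n → n ≤ m → (P n).coeff m = 0 := by
    intro n m hn hnm
    rcases eq_or_lt_of_le hn with h1 | h2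
    · rw [← h1, hP1]
      exact Polynomial.coeff_C_ne_zero (by omega)
    · rw [hPrec n h2, PowerSeries.coeff_trunc]
      simp [Nat.not_lt.mpr hnm]
  -- convolution recursion
  have hconv : ∀ n m : ℕ, 1 ≤ n → m < n →
      (R n).coeff m = ∑ i ∈ range (m+1), (R (n-1)).coeff i * PowerSeries.coeff (m-i) s := by
    intro n m hn hm
    rcases eq_or_lt_of_le hn with h1 | h2
    · have hn1 : n = 1 := h1.symm
      subst hn1
      interval_cases m
      simp [hRn 1 le_rfl, hP1, hR0, PowerSeries.coeff_zero_eq_constantCoeff]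
    · rw [hRn n (by omega), hPrec n h2, PowerSeries.coeff_trunc, if_pos hm,
        PowerSeries.coeff_mul, Finset.Nat.sum_antidiagonal_eq_sum_range_succ_mk]
      refine Finset.sum_congr rfl fun i hi => ?_
      rw [Polynomial.coeff_coe, hRn (n-1) (by omega)]
  -- key identity
  have hkey : ∀ n m : ℕ, m < n →
      (R n).coeff m = ∑ r ∈ range (m+1),
        PowerSeries.coeff (r+1) q * (R (n-1-r)).coeff (m-r) := by
    intro n
    induction n using Nat.strong_induction_on with
    | _ n ih =>
      intro m hm
      have hn1 : 1 ≤ n := by omega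
      by_cases hmtop : m = n - 1
      · -- top coefficient
        subst hmtop
        rw [hRn n hn1, ← hq n hn1]
        rw [Finset.sum_range_succ]
        have hz : ∑ r ∈ range (n-1),
            PowerSeries.coeff (r+1) q * (R (n-1-r)).coeff (n-1-r) = 0 := by
          refine Finset.sum_eq_zero fun r hr => ?_
          rw [mem_range] at hr
          rw [hRn (n-1-r) (by omega), hdeg (n-1-r) (n-1-r) (by omega) le_rfl, mul_zero]
        rw [hz, zero_add]
        rw [show n - 1 - (n-1) = 0 from by omega, show n - 1 + 1 = n from by omega, hR0]
        simp
      · -- m ≤ n - 2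
        have hm2 : m + 2 ≤ n := by omega
        rw [hconv n m hn1 hm]
        have step1 : ∀ i ∈ range (m+1),
            (R (n-1)).coeff i * PowerSeries.coeff (m-i) s
              = ∑ r ∈ range (i+1),
                  PowerSeries.coeff (r+1) q * (R (n-2-r)).coeff (i-r)
                    * PowerSeries.coeff (m-i) s := by
          intro i hi
          rw [mem_range] at hi
          rw [ih (n-1) (by omega) i (by omega), Finset.sum_mul]
          refine Finset.sum_congr rfl fun r hr => ?_
          rw [show n - 1 - 1 - r = n - 2 - r from by omega]
        rw [Finset.sum_congr rfl step1,
          swap (fun i r => PowerSeries.coeff (r+1) q * (R (n-2-r)).coeff (i-r)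
            * PowerSeries.coeff (m-i) s) m]
        refine Finset.sum_congr rfl fun r hr => ?_
        rw [mem_range] at hr
        rw [hconv (n-1-r) (m-r) (by omega) (by omega), Finset.mul_sum]
        rw [show m + 1 - r = (m - r) + 1 from by omega]
        refine Finset.sum_congr rfl fun i hi => ?_
        rw [mem_range] at hi
        rw [show i + r - r = i from by omega, show m - (i + r) = m - r - i from by omega,
          show n - 1 - r - 1 = n - 2 - r from by omega, mul_assoc]
  -- the polynomial-level identity, packaged as: Qser = q̃ + (C X * q̃) * Qser
  have hmain : Qser = PowerSeries.map (Polynomial.C : K →+* Polynomial K) q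
      + PowerSeries.C Polynomial.X *
          PowerSeries.map (Polynomial.C : K →+* Polynomial K) q * Qser := by
    refine PowerSeries.ext fun n => ?_
    rw [map_add, PowerSeries.coeff_map]
    rcases Nat.eq_zero_or_pos n with hn0 | hn1
    · subst hn0
      simp only [PowerSeries.coeff_zero_eq_constantCoeff] at *
      rw [hQ0, hq0, map_mul, map_mul, hQ0, mul_zero, map_zero, add_zero]
    · rw [hQ n hn1, mul_assoc, PowerSeries.coeff_C_mul, PowerSeries.coeff_mul,
        Finset.Nat.sum_antidiagonal_eq_sum_range_succ_mk]
      refine Polynomial.ext fun j => ?_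
      rw [Polynomial.coeff_add, Polynomial.coeff_reflect]
      rcases Nat.eq_zero_or_pos j with hj0 | hj1
      · subst hj0
        rw [Polynomial.revAt_le (Nat.zero_le _), Nat.sub_zero, Polynomial.mul_coeff_zero,
          Polynomial.coeff_X_zero, zero_mul, add_zero, Polynomial.coeff_C_zero, hq n hn1]
      · obtain ⟨j', rfl⟩ : ∃ j', j = j'+1 := ⟨j-1, by omega⟩
        rw [Polynomial.coeff_X_mul, Polynomial.coeff_C_succ, zero_add,
          Polynomial.finset_sum_coeff]
        have hterm : ∀ k, (PowerSeries.coeff k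
              (PowerSeries.map (Polynomial.C : K →+* Polynomial K) q)
            * PowerSeries.coeff (n-k) Qser).coeff j'
            = PowerSeries.coeff k q
              * (PowerSeries.coeff (n-k) Qser).coeff j' := by
          intro k
          rw [PowerSeries.coeff_map, Polynomial.coeff_C_mul]
        rw [Finset.sum_congr rfl fun k _ => hterm k]
        by_cases hjn : j' + 2 ≤ n
        · -- main case
          have hmlt : n - 2 - j' < n := by omega
          rw [Polynomial.revAt_le (by omega : j' + 1 ≤ n - 1),
            show n - 1 - (j'+1) = n - 2 - j' from by omega,
            ← hRn n hn1, hkey n (n-2-j') hmlt]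
          conv_rhs => rw [Finset.sum_range_succ']
          rw [PowerSeries.coeff_zero_eq_constantCoeff, hq0, zero_mul, add_zero]
          have hsub : range (n-2-j'+1) ⊆ range n := by
            apply Finset.range_subset_range.mpr; omega
          rw [← Finset.sum_subset hsub ?hvanish]
          case hvanish =>
            intro r hrn hrm
            rw [mem_range] at hrn
            rw [mem_range, not_lt] at hrm
            rcases eq_or_lt_of_le (by omega : r + 1 ≤ n) with he | hlt
            · rw [show n - (r+1) = 0 from by omega,
                PowerSeries.coeff_zero_eq_constantCoeff, hQ0, Polynomial.coeff_zero, mul_zero]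
            · have h1 : 1 ≤ n - (r+1) := by omega
              rw [hQ (n-(r+1)) h1, Polynomial.coeff_reflect,
                Polynomial.revAt_eq_self_of_lt (by omega),
                hdeg (n-(r+1)) j' h1 (by omega), mul_zero]
          refine Finset.sum_congr rfl fun r hr => ?_
          rw [mem_range] at hr
          have h1 : 1 ≤ n - (r+1) := by omega
          rw [hQ (n-(r+1)) h1, Polynomial.coeff_reflect,
            Polynomial.revAt_le (by omega : j' ≤ n - (r+1) - 1),
            show n-1-r = n-(r+1) from by omega, hRn (n-(r+1)) h1,
            show n-(r+1)-1-j' = n-2-j'-r from by omega]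
        · -- vanishing case : j' ≥ n - 1
          rw [Polynomial.revAt_eq_self_of_lt (by omega), hdeg n (j'+1) hn1 (by omega)]
          symm
          refine Finset.sum_eq_zero fun k hk => ?_
          rw [mem_range] at hk
          rcases Nat.eq_zero_or_pos k with hk0 | hk1
          · subst hk0
            rw [PowerSeries.coeff_zero_eq_constantCoeff, hq0, zero_mul]
          · rcases eq_or_lt_of_le (by omega : k ≤ n) with he | hlt
            · rw [he, show n - n = 0 from by omega,
                PowerSeries.coeff_zero_eq_constantCoeff, hQ0, Polynomial.coeff_zero, mul_zero]
            · have h1 : 1 ≤ n - k := by omega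
              rw [hQ (n-k) h1, Polynomial.coeff_reflect,
                Polynomial.revAt_eq_self_of_lt (by omega),
                hdeg (n-k) j' h1 (by omega), mul_zero]
  linear_combination hmain
end

section
/- With Q_n and q as above, for all k ≥ 0 the coefficient [x^k] of Σ_{n≥1} Q_n(x)t^n equals q(t)^{k+1}; equivalently [x^k]Q_n(x) = [t^n](q(t)^{k+1}) for all n ≥ 1. -/
open PowerSeries

/-- With `P₁ = s₀`, `P_k = ⌊P_{k-1}·s⌋_k`, `Q_n(x) = x^{n-1}·P_n(1/x)` and
`q(t) = Σ_{n≥1} Q_n(0)·t^n`, one has `[x^k]Q_n(x) = [t^n](q(t)^{k+1})`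
for all `k ≥ 0` and `n ≥ 1`. -/
theorem reflected_truncations_coeff_powers {K : Type*} [Field K] [CharZero K]
    (s : PowerSeries K) (hs : PowerSeries.constantCoeff s ≠ 0)
    (P : ℕ → Polynomial K)
    (hP1 : P 1 = Polynomial.C (PowerSeries.constantCoeff s))
    (hPrec : ∀ k, 2 ≤ k → P k = PowerSeries.trunc k ((P (k - 1) : PowerSeries K) * s))
    (q : PowerSeries K)
    (hq0 : PowerSeries.constantCoeff q = 0)
    (hq : ∀ n, 1 ≤ n → PowerSeries.coeff n q = (P n).coeff (n - 1)) :
    ∀ k n : ℕ, 1 ≤ n →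
      (Polynomial.reflect (n - 1) (P n)).coeff k =
        PowerSeries.coeff n (q ^ (k + 1)) := by
  classical
  -- coefficients of `q ^ j` vanish below degree `j`
  have hpow : ∀ j n : ℕ, n < j → PowerSeries.coeff n (q ^ j) = 0 := by
    intro j
    induction j with
    | zero => intro n hn; omega
    | succ j ih =>
      intro n hn
      rw [pow_succ, PowerSeries.coeff_mul]
      apply Finset.sum_eq_zero
      intro p hp
      rw [Finset.HasAntidiagonal.mem_antidiagonal] at hp
      rcases Nat.lt_or_ge p.1 j with h | h
      · rw [ih p.1 h, zero_mul]
      · have h2 : p.2 = 0 := by omega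
        rw [h2, PowerSeries.coeff_zero_eq_constantCoeff, hq0, mul_zero]
  -- degree bound on `P n`
  have hdeg : ∀ n, 1 ≤ n → ∀ j, n ≤ j → (P n).coeff j = 0 := by
    intro n hn j hj
    have hd : (P n).degree < (n : ℕ) := by
      rcases Nat.lt_or_ge n 2 with h | h
      · have hn1 : n = 1 := by omega
        subst hn1
        rw [hP1]
        exact lt_of_le_of_lt Polynomial.degree_C_le (by norm_num)
      · rw [hPrec n h]
        exact PowerSeries.degree_trunc_lt _ _
    exact Polynomial.coeff_eq_zero_of_degree_lt
      (lt_of_lt_of_le hd (by exact_mod_cast hj))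
  -- reflected coefficients
  have hbdef : ∀ n k : ℕ, k ≤ n - 1 →
      (Polynomial.reflect (n - 1) (P n)).coeff k = (P n).coeff (n - 1 - k) := by
    intro n k hk
    rw [Polynomial.coeff_reflect, Polynomial.revAt_le hk]
  have hbz : ∀ n k : ℕ, 1 ≤ n → n ≤ k →
      (Polynomial.reflect (n - 1) (P n)).coeff k = 0 := by
    intro n k hn hk
    rw [Polynomial.coeff_reflect, Polynomial.revAt_eq_self_of_lt (by omega),
      hdeg n hn k hk]
  -- recurrence at the level of coefficients
  have hrec : ∀ n, 2 ≤ n → ∀ j, j < n → (P n).coeff j =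
      ∑ p ∈ Finset.HasAntidiagonal.antidiagonal j,
        (P (n - 1)).coeff p.1 * PowerSeries.coeff p.2 s := by
    intro n hn j hj
    rw [hPrec n hn]
    rw [PowerSeries.coeff_trunc, if_pos hj, PowerSeries.coeff_mul]
    simp [Polynomial.coeff_coe]
  suffices main : ∀ n, 1 ≤ n → ∀ k,
      (Polynomial.reflect (n - 1) (P n)).coeff k =
        PowerSeries.coeff n (q ^ (k + 1)) by
    intro k n hn; exact main n hn k
  intro n
  induction n using Nat.strong_induction_on with
  | _ n IH =>
  intro hn k
  rcases k with _ | k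
  · -- k = 0
    rw [hbdef n 0 (by omega), Nat.sub_zero, zero_add, pow_one, hq n hn]
  · by_cases hk : n ≤ k + 1
    · rw [hbz n (k + 1) hn hk, hpow (k + 1 + 1) n (by omega)]
    · push_neg at hk
      have hn2 : 2 ≤ n := by omega
      obtain ⟨u, hu⟩ := PowerSeries.X_dvd_iff.mpr hq0
      -- key: coefficients of `u` expand via `s` and powers of `q`
      have hL : ∀ m, m ≤ n - 1 → PowerSeries.coeff m u =
          ∑ d ∈ Finset.range n,
            PowerSeries.coeff m (q ^ d) * PowerSeries.coeff d s := by
        intro m hm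
        have h1 : PowerSeries.coeff m u = PowerSeries.coeff (m + 1) q := by
          rw [hu, PowerSeries.coeff_succ_X_mul]
        rcases Nat.eq_zero_or_pos m with hm0 | hm1
        · subst hm0
          have h2 : PowerSeries.coeff 1 q = PowerSeries.constantCoeff s := by
            rw [hq 1 le_rfl, hP1]; simp
          rw [h1, h2]
          rw [Finset.sum_eq_single 0]
          · simp
          · intro d _ hdne
            rw [hpow d 0 (Nat.pos_of_ne_zero hdne), zero_mul]
          · intro h; exact absurd (Finset.mem_range.mpr (by omega)) h
        · have hm2 : 2 ≤ m + 1 := by omega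
          rw [h1, hq (m + 1) (by omega)]
          rw [show m + 1 - 1 = m from rfl, hrec (m + 1) hm2 m (by omega)]
          have key : ∀ p ∈ Finset.HasAntidiagonal.antidiagonal m,
              (P (m + 1 - 1)).coeff p.1 * PowerSeries.coeff p.2 s
              = PowerSeries.coeff m (q ^ p.2) * PowerSeries.coeff p.2 s := by
            intro p hp
            rw [Finset.HasAntidiagonal.mem_antidiagonal] at hp
            rw [show m + 1 - 1 = m from rfl]
            congr 1
            rcases Nat.lt_or_ge p.1 m with h | h
            · have e2 : p.2 = m - 1 - p.1 + 1 := by omega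
              rw [e2, ← IH m (by omega) hm1 (m - 1 - p.1)]
              have e1 : m - 1 - (m - 1 - p.1) = p.1 := by omega
              rw [hbdef m (m - 1 - p.1) (by omega), e1]
            · have hp1 : p.1 = m := by omega
              have hp2 : p.2 = 0 := by omega
              rw [hp1, hp2, hdeg m hm1 m le_rfl, pow_zero,
                PowerSeries.coeff_one, if_neg (by omega)]
          rw [Finset.sum_congr rfl key]
          rw [Finset.Nat.sum_antidiagonal_eq_sum_range_succ_mk]
          have hrefl := Finset.sum_range_reflect
            (fun d => PowerSeries.coeff m (q ^ d) * PowerSeries.coeff d s) (m + 1)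
          simp only [Nat.add_sub_cancel] at hrefl
          rw [hrefl]
          apply Finset.sum_subset (Finset.range_subset_range.mpr (by omega))
          intro d _ hd
          simp only [Finset.mem_range, not_lt] at hd
          rw [hpow d m (by omega), zero_mul]
      -- now the main computation
      set N := n - 1 - (k + 1) with hN
      rw [hbdef n (k + 1) (by omega), hrec n hn2 (n - 1 - (k + 1)) (by omega)]
      have key2 : ∀ p ∈ Finset.HasAntidiagonal.antidiagonal N,
          (P (n - 1)).coeff p.1 * PowerSeries.coeff p.2 s
          = PowerSeries.coeff (n - 1) (q ^ (k + 1 + p.2)) *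
              PowerSeries.coeff p.2 s := by
        intro p hp
        rw [Finset.HasAntidiagonal.mem_antidiagonal] at hp
        congr 1
        have e2 : k + 1 + p.2 = n - 1 - 1 - p.1 + 1 := by omega
        rw [e2, ← IH (n - 1) (by omega) (by omega) (n - 1 - 1 - p.1)]
        have e1 : n - 1 - 1 - (n - 1 - 1 - p.1) = p.1 := by omega
        rw [hbdef (n - 1) (n - 1 - 1 - p.1) (by omega), e1]
      rw [Finset.sum_congr rfl key2]
      rw [Finset.Nat.sum_antidiagonal_eq_sum_range_succ_mk]
      have hrefl2 := Finset.sum_range_reflect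
        (fun d => PowerSeries.coeff (n - 1) (q ^ (k + 1 + d)) *
          PowerSeries.coeff d s) (N + 1)
      simp only [Nat.add_sub_cancel] at hrefl2
      rw [hrefl2]
      trans ∑ d ∈ Finset.range n,
        PowerSeries.coeff (n - 1) (q ^ (k + 1 + d)) * PowerSeries.coeff d s
      · apply Finset.sum_subset (Finset.range_subset_range.mpr (by omega))
        intro d _ hd
        simp only [Finset.mem_range, not_lt] at hd
        rw [hpow (k + 1 + d) (n - 1) (by omega), zero_mul]
      · have hn1 : n = (n - 1) + 1 := by omega
        have hR : PowerSeries.coeff n (q ^ (k + 1 + 1)) =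
            ∑ p ∈ Finset.HasAntidiagonal.antidiagonal (n - 1),
              PowerSeries.coeff p.1 u *
                PowerSeries.coeff p.2 (q ^ (k + 1)) := by
          rw [pow_succ', hu, mul_assoc]
          conv_lhs => rw [hn1]
          rw [PowerSeries.coeff_succ_X_mul, PowerSeries.coeff_mul]
        rw [hR]
        have key3 : ∀ p ∈ Finset.HasAntidiagonal.antidiagonal (n - 1),
            PowerSeries.coeff p.1 u * PowerSeries.coeff p.2 (q ^ (k + 1))
            = ∑ d ∈ Finset.range n,
                PowerSeries.coeff p.1 (q ^ d) * PowerSeries.coeff d s *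
                  PowerSeries.coeff p.2 (q ^ (k + 1)) := by
          intro p hp
          rw [Finset.HasAntidiagonal.mem_antidiagonal] at hp
          rw [hL p.1 (by omega), Finset.sum_mul]
        rw [Finset.sum_congr rfl key3, Finset.sum_comm]
        apply Finset.sum_congr rfl
        intro d _
        rw [show k + 1 + d = d + (k + 1) by omega, pow_add,
          PowerSeries.coeff_mul, Finset.sum_mul]
        apply Finset.sum_congr rfl
        intro p _
        ring
end

section
/- For the exponential series s(x) = e^x, the polynomials defined by P_1 = 1 and P_k = ⌊P_{k-1}·e^x⌋_k (truncation to degree < k) satisfy P_n(x) = (1/n)·Σ_{j=0}^{n} (n−j)·(nx)^j/j! for all n ≥ 1. -/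
open PowerSeries
open Finset

lemma sum_choose_pow (m : ℕ) (x : ℚ) :
    ∑ j ∈ range (m+1), (m.choose j : ℚ) * x ^ j = (x+1)^m := by
  rw [add_pow]
  apply Finset.sum_congr rfl
  intro j hj
  ring

lemma sum_choose_mul_pow (m : ℕ) (x : ℚ) :
    ∑ j ∈ range (m+1), (m.choose j : ℚ) * j * x ^ j = m * x * (x+1)^(m-1) := by
  cases m with
  | zero => simp
  | succ m =>
    rw [Finset.sum_range_succ']
    simp only [Nat.cast_zero, mul_zero, zero_mul, pow_zero, add_zero]
    have h : ∀ i : ℕ, ((m+1).choose (i+1) : ℚ) * ((i+1:ℕ):ℚ) = ((m:ℚ)+1) * (m.choose i) := by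
      intro i
      have h2 := Nat.add_one_mul_choose_eq m i
      have h3 : ((m.succ * m.choose i : ℕ) : ℚ) = ((m.succ.choose i.succ * i.succ : ℕ) : ℚ) := by
        exact congrArg (Nat.cast (R:=ℚ)) h2
      push_cast at h3
      rw [show ((m+1).choose (i+1) : ℚ) = (m.succ.choose i.succ : ℚ) from rfl]
      push_cast
      linarith [h3]
    calc ∑ k ∈ range (m+1), ((m+1).choose (k+1) : ℚ) * ((k+1:ℕ):ℚ) * x ^ (k+1)
        = ∑ k ∈ range (m+1), ((m:ℚ)+1) * x * ((m.choose k : ℚ) * x ^ k) := by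
          apply Finset.sum_congr rfl; intro k hk
          rw [h k]; ring
      _ = ((m:ℚ)+1) * x * (x+1)^m := by
          rw [← Finset.mul_sum, sum_choose_pow]
      _ = ((m+1:ℕ):ℚ) * x * (x+1)^(m+1-1) := by push_cast; ring

lemma key_sum (n m : ℕ) (hn : 1 ≤ n) :
    ∑ j ∈ range (m+1),
        ((n:ℚ)⁻¹ * ((n:ℚ)-(j:ℚ)) * (n:ℚ)^j / (j.factorial:ℚ)) * ((m-j).factorial:ℚ)⁻¹
      = ((n:ℚ)+1)⁻¹ * (((n:ℚ)+1) - (m:ℚ)) * ((n:ℚ)+1)^m / (m.factorial:ℚ) := by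
  have hn0 : (n:ℚ) ≠ 0 := by exact Nat.cast_ne_zero.mpr (by omega)
  have hn1 : (n:ℚ)+1 ≠ 0 := by positivity
  have hm0 : (m.factorial:ℚ) ≠ 0 := by exact_mod_cast m.factorial_ne_zero
  have step1 : ∑ j ∈ range (m+1),
        ((n:ℚ)⁻¹ * ((n:ℚ)-(j:ℚ)) * (n:ℚ)^j / (j.factorial:ℚ)) * ((m-j).factorial:ℚ)⁻¹
      = (n:ℚ)⁻¹ * (m.factorial:ℚ)⁻¹ *
          ∑ j ∈ range (m+1), (m.choose j : ℚ) * ((n:ℚ)-(j:ℚ)) * (n:ℚ)^j := by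
    rw [Finset.mul_sum]
    apply Finset.sum_congr rfl
    intro j hj
    have hj' : j ≤ m := by simpa using Nat.lt_succ_iff.mp (Finset.mem_range.mp hj)
    have hcq : (m.choose j : ℚ) * (j.factorial:ℚ) * ((m-j).factorial:ℚ) = (m.factorial:ℚ) := by
      exact_mod_cast congrArg (Nat.cast (R:=ℚ)) (Nat.choose_mul_factorial_mul_factorial hj')
    have hj0 : (j.factorial:ℚ) ≠ 0 := by exact_mod_cast j.factorial_ne_zero
    have hmj0 : ((m-j).factorial:ℚ) ≠ 0 := by exact_mod_cast (m-j).factorial_ne_zero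
    field_simp
    linear_combination ((j:ℚ) - (n:ℚ)) * hcq
  rw [step1]
  have split : ∑ j ∈ range (m+1), (m.choose j : ℚ) * ((n:ℚ)-(j:ℚ)) * (n:ℚ)^j
      = (n:ℚ) * (∑ j ∈ range (m+1), (m.choose j : ℚ) * (n:ℚ)^j)
        - ∑ j ∈ range (m+1), (m.choose j : ℚ) * (j:ℚ) * (n:ℚ)^j := by
    rw [Finset.mul_sum, ← Finset.sum_sub_distrib]
    apply Finset.sum_congr rfl
    intro j hj
    ring
  rw [split, sum_choose_pow, sum_choose_mul_pow]
  cases m with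
  | zero =>
    norm_num
    field_simp
  | succ m =>
    rw [show m + 1 - 1 = m from rfl]
    push_cast
    field_simp
    ring

lemma coeff_Q (N : ℕ) (c : ℕ → ℚ) (m : ℕ) :
    (∑ j ∈ Finset.range N, Polynomial.C (c j) * Polynomial.X ^ j).coeff m
      = if m < N then c m else 0 := by
  rw [Polynomial.finset_sum_coeff]
  simp [Polynomial.coeff_C_mul, Polynomial.coeff_X_pow, Finset.sum_ite_eq']


/-- For `s(x) = e^x`, the truncation polynomials `P₁ = 1`, `P_k = ⌊P_{k-1}·e^x⌋_k`
satisfy `P_n(x) = (1/n)·Σ_{j=0}^{n} (n−j)·(nx)^j/j!` for all `n ≥ 1`. -/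
theorem exp_truncation_polynomials
    (P : ℕ → Polynomial ℚ)
    (hP1 : P 1 = 1)
    (hPrec : ∀ k, 2 ≤ k →
      P k = PowerSeries.trunc k ((P (k - 1) : PowerSeries ℚ) * PowerSeries.exp ℚ)) :
    ∀ n, 1 ≤ n →
      P n = ∑ j ∈ Finset.range (n + 1),
        Polynomial.C ((n : ℚ)⁻¹ * ((n : ℚ) - (j : ℚ)) * (n : ℚ) ^ j / (j.factorial : ℚ)) *
          Polynomial.X ^ j := by
  intro n hn
  induction n, hn using Nat.le_induction with
  | base =>
    rw [hP1, Finset.sum_range_succ, Finset.sum_range_succ, Finset.sum_range_zero]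
    norm_num
  | succ n hn ih =>
    rw [hPrec (n+1) (by omega)]
    simp only [Nat.add_sub_cancel]
    rw [ih]
    apply Polynomial.ext
    intro m
    rw [PowerSeries.coeff_trunc, coeff_Q]
    by_cases hm : m < n + 1
    · rw [if_pos hm, if_pos (by omega), PowerSeries.coeff_mul,
        Finset.Nat.sum_antidiagonal_eq_sum_range_succ_mk]
      have hstep : ∀ k ∈ Finset.range m.succ,
          (PowerSeries.coeff (k, m - k).1)
              ((∑ j ∈ Finset.range (n + 1), Polynomial.C ((n:ℚ)⁻¹ * ((n:ℚ) - (j:ℚ)) * (n:ℚ) ^ j / (j.factorial:ℚ)) * Polynomial.X ^ j : Polynomial ℚ) : PowerSeries ℚ) *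
            (PowerSeries.coeff (k, m - k).2) (PowerSeries.exp ℚ)
          = ((n:ℚ)⁻¹ * ((n:ℚ)-(k:ℚ)) * (n:ℚ)^k / (k.factorial:ℚ)) * (((m-k).factorial:ℚ))⁻¹ := by
        intro k hk
        have hk' : k < n + 1 := by
          have := Finset.mem_range.mp hk; omega
        rw [Polynomial.coeff_coe, coeff_Q, if_pos hk', PowerSeries.coeff_exp]
        simp [one_div]
      rw [Finset.sum_congr rfl hstep, key_sum n m hn]
      push_cast
      ring
    · rw [if_neg hm]
      by_cases hm2 : m < n + 2
      · rw [if_pos hm2]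
        have : m = n + 1 := by omega
        subst this
        push_cast
        ring
      · rw [if_neg hm2]
end

section
/- For s(x) = e^x, the top coefficients Q_n(0) = [x^{n-1}]P_n(x) of the truncation polynomials satisfy Q_n(0) = n^{n-2}/(n−1)! for all n ≥ 1. -/
open PowerSeries Finset

lemma exp_trunc_term_eq (m i : ℕ) (h : i ≤ m) (x : ℚ) :
    x^i/(i.factorial * (m-i).factorial) = x^i * (m.choose i : ℚ)/ m.factorial := by
  have h2 := Nat.choose_mul_factorial_mul_factorial h
  have h3 : (m.choose i : ℚ) * i.factorial * (m-i).factorial = m.factorial := by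
    exact_mod_cast congrArg (Nat.cast (R:=ℚ)) h2
  have f1 : (i.factorial:ℚ) ≠ 0 := Nat.cast_ne_zero.2 i.factorial_ne_zero
  have f2 : ((m-i).factorial:ℚ) ≠ 0 := Nat.cast_ne_zero.2 (m-i).factorial_ne_zero
  have f3 : (m.factorial:ℚ) ≠ 0 := Nat.cast_ne_zero.2 m.factorial_ne_zero
  rw [div_eq_div_iff (mul_ne_zero f1 f2) f3]
  linear_combination -x^i * h3

lemma exp_trunc_sum1 (x : ℚ) (m : ℕ) :
    ∑ i ∈ Finset.range (m+1), x^i / (i.factorial * (m-i).factorial) = (x+1)^m / m.factorial := by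
  rw [Finset.sum_congr rfl
    (fun i hi => exp_trunc_term_eq m i (Nat.lt_succ_iff.mp (Finset.mem_range.mp hi)) x),
    ← Finset.sum_div]
  congr 1
  rw [add_pow]
  simp [mul_comm]

lemma exp_trunc_sum2 (x : ℚ) (j : ℕ) (hj : 1 ≤ j) :
    ∑ i ∈ Finset.range (j+1), (i:ℚ) * x^(i-1) / (i.factorial * ((j-i).factorial))
      = (x+1)^(j-1) / (j-1).factorial := by
  rw [Finset.sum_range_succ']
  simp only [Nat.cast_zero, zero_mul, zero_div, add_zero]
  have hre : ∀ i ∈ Finset.range j,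
      ((i+1:ℕ):ℚ) * x^((i+1)-1) / ((i+1).factorial * ((j-(i+1)).factorial))
      = x^i / (i.factorial * ((j-1-i).factorial)) := by
    intro i hi
    have h1 : j - (i+1) = j - 1 - i := by omega
    rw [h1, Nat.factorial_succ]
    push_cast
    have f1 : (i.factorial:ℚ) ≠ 0 := Nat.cast_ne_zero.2 i.factorial_ne_zero
    have f2 : ((j-1-i).factorial:ℚ) ≠ 0 := Nat.cast_ne_zero.2 (j-1-i).factorial_ne_zero
    have f3 : ((i:ℚ)+1) ≠ 0 := by positivity
    field_simp
  rw [Finset.sum_congr rfl hre]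
  have := exp_trunc_sum1 x (j-1)
  rwa [Nat.sub_add_cancel hj] at this

/-- For `s(x) = e^x`, the top coefficients `Q_n(0) = [x^{n-1}]P_n(x)` of the truncation
polynomials `P₁ = 1`, `P_k = ⌊P_{k-1}·e^x⌋_k` satisfy `Q_n(0) = n^{n-2}/(n−1)!`
for all `n ≥ 1` (with `1^{-1} = 1` for `n = 1`, via the integer power `n^{(n:ℤ)-2}`). -/
theorem exp_truncation_top_coeff
    (P : ℕ → Polynomial ℚ)
    (hP1 : P 1 = 1)
    (hPrec : ∀ k, 2 ≤ k →
      P k = PowerSeries.trunc k ((P (k - 1) : PowerSeries ℚ) * PowerSeries.exp ℚ)) :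
    ∀ n, 1 ≤ n →
      (P n).coeff (n - 1) = (n : ℚ) ^ ((n : ℤ) - 2) / ((n - 1).factorial : ℚ) := by
  have key : ∀ n, 1 ≤ n → ∀ j ≤ n,
      (P n).coeff j = ((n:ℚ)^j - (j:ℚ)*(n:ℚ)^(j-1))/j.factorial := by
    intro n hn
    induction n, hn using Nat.le_induction with
    | base =>
      intro j hj
      interval_cases j
      · simp [hP1]
      · simp [hP1, Polynomial.coeff_one]
    | succ n hn ih =>
      intro j hj
      have hrec := hPrec (n+1) (by omega)
      simp only [Nat.add_sub_cancel] at hrec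
      rcases eq_or_lt_of_le hj with rfl | hjlt
      · -- j = n+1 : coefficient of trunc (n+1) at n+1 is 0, and RHS is 0
        rw [hrec, PowerSeries.coeff_trunc, if_neg (lt_irrefl _), Nat.add_sub_cancel]
        push_cast
        rw [show ((n:ℚ)+1)^(n+1) - ((n:ℚ)+1)*((n:ℚ)+1)^n = 0 from by rw [pow_succ]; ring]
        simp
      · -- j ≤ n
        have hjn : j ≤ n := by omega
        rw [hrec, PowerSeries.coeff_trunc, if_pos hjlt, PowerSeries.coeff_mul,
          Finset.Nat.sum_antidiagonal_eq_sum_range_succ_mk]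
        have hterm : ∀ i ∈ Finset.range (j+1),
            (PowerSeries.coeff i) (P n : PowerSeries ℚ) *
              (PowerSeries.coeff (j-i)) (PowerSeries.exp ℚ)
            = (n:ℚ)^i / (i.factorial * (j-i).factorial)
              - (i:ℚ)*(n:ℚ)^(i-1) / (i.factorial * (j-i).factorial) := by
          intro i hi
          have hij : i ≤ j := Nat.lt_succ_iff.mp (Finset.mem_range.mp hi)
          rw [Polynomial.coeff_coe, ih i (le_trans hij hjn), PowerSeries.coeff_exp]
          have f1 : (i.factorial:ℚ) ≠ 0 := Nat.cast_ne_zero.2 i.factorial_ne_zero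
          have f2 : ((j-i).factorial:ℚ) ≠ 0 := Nat.cast_ne_zero.2 (j-i).factorial_ne_zero
          simp only [Algebra.algebraMap_self, map_div₀, map_one, RingHom.id_apply,
            Algebra.algebraMap_self]
          field_simp
        rw [Finset.sum_congr rfl hterm, Finset.sum_sub_distrib, exp_trunc_sum1]
        rcases Nat.eq_zero_or_pos j with rfl | hj1
        · simp
        · rw [exp_trunc_sum2 _ _ hj1]
          have f3 : (j.factorial:ℚ) ≠ 0 := Nat.cast_ne_zero.2 j.factorial_ne_zero
          have f4 : ((j-1).factorial:ℚ) ≠ 0 := Nat.cast_ne_zero.2 (j-1).factorial_ne_zero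
          have hfac : (j.factorial:ℚ) = (j:ℚ) * (j-1).factorial := by
            obtain ⟨t, rfl⟩ : ∃ t, j = t + 1 := ⟨j - 1, by omega⟩
            rw [Nat.factorial_succ]
            push_cast [Nat.add_sub_cancel]
            ring
          push_cast
          rw [div_sub_div _ _ f3 f4, hfac]
          have f5 : (j:ℚ) ≠ 0 := Nat.cast_ne_zero.2 (by omega)
          field_simp
  intro n hn
  rcases Nat.lt_or_ge n 2 with h2 | h2
  · interval_cases n
    simp [hP1]
  · obtain ⟨m, rfl⟩ : ∃ m, n = m + 2 := ⟨n - 2, by omega⟩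
    have := key (m+2) (by omega) (m+1) (by omega)
    simp only [show m+2-1 = m+1 from by omega, Nat.add_sub_cancel] at this ⊢
    rw [this]
    have hz : ((m+2:ℕ):ℤ) - 2 = (m:ℤ) := by push_cast; ring
    rw [hz, zpow_natCast]
    congr 1
    push_cast [Nat.add_sub_cancel]
    rw [pow_succ]
    ring
end

section
/- For all integers n > k > 1 the identity (k+1)·(n−k)·n^{n−2−k} = k·Σ_{m=k}^{n−1} C(n−k, n−m)·m^{m−1−k}·(n−m)^{n−m−1} holds, where C denotes the binomial coefficient. -/
open Polynomial Finset

noncomputable def abP (j : ℕ) : ℚ[X] := if j = 0 then 1 else X * (X + (j : ℚ[X])) ^ (j - 1)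

def abq (j : ℕ) (y : ℚ) : ℚ := if j = 0 then 1 else y * (y + j) ^ (j - 1)

lemma eval_Ab (j : ℕ) (y : ℚ) : (abP j).eval y = abq j y := by
  unfold abP abq; split <;> simp

lemma deriv_Ab (j : ℕ) :
    derivative (abP (j + 1)) = ((j : ℚ[X]) + 1) * (abP j).comp (X + 1) := by
  match j with
  | 0 => simp [abP]
  | i + 1 =>
    have h1 : (i + 1 + 1 : ℕ) ≠ 0 := by omega
    have h2 : (i + 1 : ℕ) ≠ 0 := by omega
    simp only [abP, if_neg h1, if_neg h2]
    have e1 : (i + 1 + 1 : ℕ) - 1 = i + 1 := by omega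
    have e2 : (i + 1 : ℕ) - 1 = i := by omega
    rw [e1, e2]
    rw [derivative_mul, derivative_X, derivative_pow, derivative_add, derivative_X,
      derivative_natCast]
    push_cast
    rw [pow_succ]
    ring_nf
    simp only [mul_comp, pow_comp, add_comp, one_comp, X_comp, natCast_comp,
      map_add, C_1, C_eq_natCast]
    ring

lemma eq_of_deriv {p q : ℚ[X]} (h : derivative p = derivative q) (h0 : p.eval 0 = q.eval 0) :
    p = q := by
  have hd : derivative (p - q) = 0 := by rw [derivative_sub, h, sub_self]
  have hc := Polynomial.eq_C_of_natDegree_eq_zero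
    (Polynomial.natDegree_eq_zero_of_derivative_eq_zero hd)
  have h00 : (p - q).coeff 0 = 0 := by
    rw [Polynomial.coeff_zero_eq_eval_zero, eval_sub, h0, sub_self]
  have : p - q = 0 := by rw [hc, h00, map_zero]
  exact sub_eq_zero.mp this

lemma abel_comp (N : ℕ) (y : ℚ) :
    ∑ j ∈ range (N + 1), (N.choose j : ℚ[X]) * abP j * C (abq (N - j) y)
      = (abP N).comp (X + C y) := by
  induction N generalizing y with
  | zero => simp [abP, abq]
  | succ n ih =>
    apply eq_of_deriv
    · rw [map_sum]
      rw [derivative_comp, deriv_Ab]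
      simp only [derivative_mul, derivative_natCast, derivative_C, zero_mul, mul_zero,
        add_zero, zero_add, derivative_add, derivative_X, one_mul]
      rw [Finset.sum_range_succ']
      have hd0 : derivative (abP 0) = 0 := by simp [abP]
      rw [hd0, mul_zero, zero_mul, add_zero]
      have key : ∀ i ∈ range (n + 1),
          ((n+1).choose (i+1) : ℚ[X]) * derivative (abP (i+1)) * C (abq (n+1-(i+1)) y)
            = ((n:ℚ[X]) + 1) * ((n.choose i : ℚ[X]) * (abP i).comp (X + 1) * C (abq (n - i) y)) := by
        intro i _
        rw [deriv_Ab]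
        have : ((n+1).choose (i+1) : ℚ[X]) * ((i:ℚ[X]) + 1) = ((n:ℚ[X]) + 1) * (n.choose i : ℚ[X]) := by
          have h := congrArg (fun t : ℕ => (t : ℚ[X])) (Nat.add_one_mul_choose_eq n i)
          push_cast at h
          linear_combination -h
        have e : n + 1 - (i + 1) = n - i := by omega
        rw [e]; linear_combination (abP i).comp (X+1) * C (abq (n-i) y) * this
      rw [Finset.sum_congr rfl key, ← Finset.mul_sum]
      have ihc := congrArg (fun p => p.comp (X + 1)) (ih y)
      simp only [Polynomial.sum_comp, mul_comp, natCast_comp, C_comp, add_comp, X_comp,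
        one_comp, comp_assoc] at ihc ⊢
      rw [ihc]
      have harg : X + 1 + C y = X + C y + 1 := by ring
      rw [harg]
    · simp only [eval_finset_sum, eval_mul, eval_natCast, eval_C, eval_comp, eval_add, eval_X]
      rw [Finset.sum_eq_single 0]
      · simp only [Nat.choose_zero_right, Nat.cast_one, one_mul, Nat.sub_zero]
        have : eval 0 (abP 0) = 1 := by simp [abP]
        rw [this, one_mul]
        have h1 : abq (n+1) y = y * (y + (n+1:ℕ)) ^ n := by simp [abq]
        have h2 : abP (n+1) = X * (X + ((n+1:ℕ) : ℚ[X])) ^ n := by simp [abP]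
        rw [h1, h2]
        push_cast
        simp
      · intro j hj hj0
        match j, hj0 with
        | i + 1, _ => simp [abP, if_neg (Nat.succ_ne_zero i)]
      · intro h; simp at h

lemma eval0_deriv_abP (i : ℕ) : eval 0 (derivative (abP (i + 1))) = ((i : ℚ) + 1) ^ i := by
  rw [deriv_Ab]
  rw [eval_mul, eval_comp]
  simp only [eval_add, eval_natCast, eval_one, eval_X, zero_add, eval_Ab]
  cases i with
  | zero => simp [abq]
  | succ m =>
    rw [abq, if_neg (Nat.succ_ne_zero m)]
    push_cast
    rw [pow_succ]
    ring_nf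

lemma abel_deriv (n : ℕ) (y : ℚ) :
    ∑ j ∈ Icc 1 (n + 1), ((n + 1).choose j : ℚ) * (j : ℚ) ^ (j - 1) * abq (n + 1 - j) y
      = ((n : ℚ) + 1) * abq n (y + 1) := by
  have h := congrArg (fun p => eval 0 (derivative p)) (abel_comp (n + 1) y)
  simp only [map_sum, eval_finset_sum, derivative_mul, derivative_natCast, derivative_C,
    zero_mul, mul_zero, add_zero, zero_add, eval_mul, eval_natCast, eval_C] at h
  rw [derivative_comp, deriv_Ab, Finset.sum_range_succ'] at h
  have hd0 : derivative (abP 0) = 0 := by simp [abP]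
  rw [hd0] at h
  simp only [eval0_deriv_abP, eval_zero, mul_zero, zero_mul, add_zero, eval_mul, eval_comp,
    mul_comp, natCast_comp, one_comp, add_comp, X_comp, C_comp, eval_add, eval_natCast,
    eval_one, eval_X, eval_C, zero_add, derivative_add, derivative_X, derivative_C,
    one_mul, eval_Ab] at h
  rw [← Finset.Ico_add_one_right_eq_Icc, Finset.sum_Ico_eq_sum_range]
  have en : n + 1 + 1 - 1 = n + 1 := by omega
  rw [en, ← h]
  apply Finset.sum_congr rfl
  intro i hi
  have e1 : 1 + i = i + 1 := by omega
  have e2 : n + 1 - (1 + i) = n + 1 - (i + 1) := by omega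
  rw [e1]
  push_cast [Nat.add_sub_cancel]
  ring

/-- For all integers `n > k > 1`:
`(k+1)·(n−k)·n^{n−2−k} = k·Σ_{m=k}^{n−1} C(n−k, n−m)·m^{m−1−k}·(n−m)^{n−m−1}`. -/
theorem tree_identity (n k : ℕ) (hk : 1 < k) (hn : k < n) :
    ((k : ℚ) + 1) * ((n : ℚ) - (k : ℚ)) * (n : ℚ) ^ ((n : ℤ) - 2 - (k : ℤ)) =
      (k : ℚ) * ∑ m ∈ Finset.Icc k (n - 1),
        ((n - k).choose (n - m) : ℚ) * (m : ℚ) ^ ((m : ℤ) - 1 - (k : ℤ)) *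
          ((n : ℚ) - (m : ℚ)) ^ ((n : ℤ) - (m : ℤ) - 1) := by
  have key := abel_deriv (n - k - 1) (k : ℚ)
  have hNe : n - k - 1 + 1 = n - k := by omega
  rw [hNe] at key
  rw [Finset.mul_sum]
  have hsum : ∑ m ∈ Finset.Icc k (n - 1),
      (k : ℚ) * (((n - k).choose (n - m) : ℚ) * (m : ℚ) ^ ((m : ℤ) - 1 - (k : ℤ)) *
          ((n : ℚ) - (m : ℚ)) ^ ((n : ℤ) - (m : ℤ) - 1))
      = ∑ j ∈ Finset.Icc 1 (n - k), ((n - k).choose j : ℚ) * (j : ℚ) ^ (j - 1) * abq (n - k - j) (k : ℚ) := by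
    apply Finset.sum_nbij' (i := fun m => n - m) (j := fun j => n - j)
    · intro m hm
      simp only [Finset.mem_Icc] at hm ⊢
      omega
    · intro j hj
      simp only [Finset.mem_Icc] at hj ⊢
      omega
    · intro m hm
      simp only [Finset.mem_Icc] at hm
      omega
    · intro j hj
      simp only [Finset.mem_Icc] at hj
      omega
    · intro m hm
      simp only [Finset.mem_Icc] at hm
      obtain ⟨h1, h2⟩ := hm
      have hmn : m ≤ n - 1 := h2
      have hmn' : m < n := by omega
      -- choose
      have hch : n - k - (n - m) = m - k := by omega
      -- last factor
      have hf3 : ((n : ℚ) - (m : ℚ)) ^ ((n : ℤ) - (m : ℤ) - 1) = ((n - m : ℕ) : ℚ) ^ ((n - m) - 1) := by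
        have hb : (n : ℚ) - (m : ℚ) = ((n - m : ℕ) : ℚ) := by
          push_cast [Nat.cast_sub hmn'.le]; ring
        have he : (n : ℤ) - (m : ℤ) - 1 = (((n - m) - 1 : ℕ) : ℤ) := by omega
        rw [hb, he, zpow_natCast]
      -- middle factor times k
      have hf2 : (k : ℚ) * (m : ℚ) ^ ((m : ℤ) - 1 - (k : ℤ)) = abq (m - k) (k : ℚ) := by
        rcases Nat.eq_or_lt_of_le h1 with h | h
        · -- m = k
          cases h
          have h5 : (k : ℤ) - 1 - (k : ℤ) = -1 := by ring
          rw [h5, Nat.sub_self, abq, if_pos rfl, zpow_neg, zpow_one,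
            mul_inv_cancel₀ (by exact_mod_cast (by omega : k ≠ 0))]
        · have hmk : m - k ≠ 0 := by omega
          rw [abq, if_neg hmk]
          have he : (m : ℤ) - 1 - (k : ℤ) = ((m - k - 1 : ℕ) : ℤ) := by omega
          have hb : (k : ℚ) + ((m - k : ℕ) : ℚ) = (m : ℚ) := by
            push_cast [Nat.cast_sub h.le]; ring
          rw [he, zpow_natCast, hb]
      rw [hch, ← hf2, hf3]
      ring
  rw [hsum, key]
  -- remains : LHS = ((n-k-1 : ℕ):ℚ + 1) * abq (n-k-1) (k+1)
  have hsub : ((n - k - 1 : ℕ) : ℚ) = (n : ℚ) - (k : ℚ) - 1 := by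
    have e : n - k - 1 = n - (k + 1) := by omega
    rw [e, Nat.cast_sub (by omega : k + 1 ≤ n)]
    push_cast
    ring
  have hNQ : ((n - k - 1 : ℕ) : ℚ) + 1 = ((n : ℚ) - (k : ℚ)) := by rw [hsub]; ring
  rw [hNQ]
  rcases Nat.eq_or_lt_of_le hn with h | h
  · -- n = k + 1
    have hn1 : n = k + 1 := by omega
    subst hn1
    have : (k : ℤ) + 1 - 2 - (k : ℤ) = -1 := by ring
    simp only [Nat.add_sub_cancel, Nat.add_sub_cancel_left, Nat.sub_self, abq, if_pos rfl]
    push_cast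
    rw [this, zpow_neg, zpow_one]
    field_simp
  · -- n ≥ k + 2
    have hnk2 : n - k - 1 ≠ 0 := by omega
    rw [abq, if_neg hnk2]
    have hb : (k : ℚ) + 1 + ((n - k - 1 : ℕ) : ℚ) = (n : ℚ) := by rw [hsub]; ring
    have he : (n : ℤ) - 2 - (k : ℤ) = ((n - k - 1 - 1 : ℕ) : ℤ) := by omega
    rw [hb, he, zpow_natCast]
    ring
end

section
/- The unique formal power series q(t) with q(0) = 0 satisfying sin²(√q) = t formally (i.e. q is the compositional inverse of p where p(x²) = sin²(x)) is q(t) = Σ_{j≥1} 2^{2j−1} t^j/(j²·C(2j,j)), where C(2j,j) is the central binomial coefficient. -/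
open PowerSeries

/-- The power series `p(x) = Σ_{j≥1} (−1)^{j+1} 2^{2j−1} x^j/(2j)!`
(so that `p(x²) = sin²x`). -/
noncomputable def pSinSq : PowerSeries ℚ :=
  PowerSeries.mk fun j =>
    if j = 0 then 0 else (-1 : ℚ) ^ (j + 1) * 2 ^ (2 * j - 1) / ((2 * j).factorial : ℚ)

/-- The power series `q(t) = Σ_{j≥1} 2^{2j−1} t^j/(j²·C(2j,j))`. -/
noncomputable def qArcsinSq : PowerSeries ℚ :=
  PowerSeries.mk fun j =>
    if j = 0 then 0 else (2 : ℚ) ^ (2 * j - 1) / ((j : ℚ) ^ 2 * ((2 * j).choose j : ℚ))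

namespace ArcAux

open Finset PowerSeries

variable {g : PowerSeries ℚ} (hg : constantCoeff g = 0)

theorem coeff_pcomp (f : PowerSeries ℚ) (n : ℕ) :
    coeff n (pcomp f g) = ∑ k ∈ range (n + 1), coeff k f * coeff n (g ^ k) := by
  simp [pcomp]

include hg in
theorem coeff_pow_eq_zero {n k : ℕ} (h : n < k) : coeff n (g ^ k) = 0 := by
  obtain ⟨u, rfl⟩ : (X : ℚ⟦X⟧) ∣ g := X_dvd_iff.mpr hg
  rw [mul_pow, PowerSeries.coeff_mul]
  apply Finset.sum_eq_zero
  rintro ⟨a, b⟩ hab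
  rw [Finset.HasAntidiagonal.mem_antidiagonal] at hab
  have ha : a ≠ k := by omega
  rw [PowerSeries.coeff_X_pow, if_neg ha, zero_mul]

include hg in
theorem coeff_aeval (P : Polynomial ℚ) (n : ℕ) :
    coeff n (Polynomial.aeval g P) = ∑ i ∈ range (n + 1), P.coeff i * coeff n (g ^ i) := by
  set M := max (P.natDegree + 1) (n + 1) with hM
  have hdeg : P.natDegree < M := lt_of_lt_of_le (Nat.lt_succ_self _) (le_max_left _ _)
  rw [Polynomial.aeval_def, Polynomial.eval₂_eq_sum_range' _ hdeg, map_sum]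
  have key : ∀ i ∈ range M, (coeff n) (algebraMap ℚ ℚ⟦X⟧ (P.coeff i) * g ^ i)
      = P.coeff i * coeff n (g ^ i) := by
    intro i _
    rw [PowerSeries.algebraMap_apply (A := ℚ)]
    simp
  rw [Finset.sum_congr rfl key]
  apply (Finset.sum_subset (Finset.range_subset_range.mpr (le_max_right _ _)) _).symm
  intro i _ hi
  rw [Finset.mem_range, not_lt] at hi
  rw [coeff_pow_eq_zero hg (by omega), mul_zero]

include hg in
theorem coeff_pcomp_eq {f : PowerSeries ℚ} {n N : ℕ} (hN : n < N) :
    coeff n (pcomp f g) = coeff n (Polynomial.aeval g (trunc N f)) := by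
  rw [coeff_pcomp, coeff_aeval hg]
  apply Finset.sum_congr rfl
  intro i hi
  rw [Finset.mem_range] at hi
  rw [coeff_trunc, if_pos (by omega)]

theorem pcomp_add (f₁ f₂ : PowerSeries ℚ) :
    pcomp (f₁ + f₂) g = pcomp f₁ g + pcomp f₂ g := by
  ext n
  simp [coeff_pcomp, add_mul, Finset.sum_add_distrib]

theorem pcomp_C (a : ℚ) : pcomp (C a) g = C a := by
  ext n
  rw [coeff_pcomp]
  rcases Nat.eq_zero_or_pos n with rfl | hn
  · simp
  · rw [Finset.sum_eq_single 0 (fun k _ hk => by rw [PowerSeries.coeff_C, if_neg hk, zero_mul])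
      (by simp)]
    simp [PowerSeries.coeff_C, PowerSeries.coeff_one, hn.ne']

theorem pcomp_one : pcomp 1 g = 1 := by
  rw [show (1 : ℚ⟦X⟧) = C 1 by simp, pcomp_C]

theorem pcomp_two : pcomp 2 g = 2 := by
  rw [show (2 : ℚ⟦X⟧) = C 2 by rw [map_ofNat], pcomp_C, map_ofNat]

include hg in
theorem pcomp_X : pcomp X g = g := by
  ext n
  rw [coeff_pcomp, Finset.sum_eq_single 1]
  · simp
  · intro k hk hk1
    rcases Nat.eq_zero_or_pos k with rfl | hkpos
    · simp
    · rw [PowerSeries.coeff_X, if_neg hk1, zero_mul]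
  · intro h
    rw [Finset.mem_range, not_lt] at h
    have : n = 0 := by omega
    subst this
    rw [PowerSeries.coeff_X, if_pos rfl, one_mul, pow_one, coeff_zero_eq_constantCoeff, hg]

include hg in
theorem pcomp_mul (f₁ f₂ : PowerSeries ℚ) :
    pcomp (f₁ * f₂) g = pcomp f₁ g * pcomp f₂ g := by
  ext n
  have hPQ : ∀ i, i < n + 1 → (trunc (n+1) (f₁ * f₂)).coeff i
      = ((trunc (n+1) f₁) * (trunc (n+1) f₂)).coeff i := by
    intro i hi
    have h := trunc_trunc_mul_trunc (n := n+1) f₁ f₂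
    rw [← h, coeff_trunc, if_pos hi, ← Polynomial.coe_mul, Polynomial.coeff_coe]
  calc coeff n (pcomp (f₁ * f₂) g)
      = coeff n (Polynomial.aeval g (trunc (n+1) (f₁ * f₂))) :=
        coeff_pcomp_eq hg (Nat.lt_succ_self n)
    _ = coeff n (Polynomial.aeval g ((trunc (n+1) f₁) * (trunc (n+1) f₂))) := by
        rw [coeff_aeval hg, coeff_aeval hg]
        exact Finset.sum_congr rfl fun i hi => by
          rw [hPQ i (Finset.mem_range.mp hi)]
    _ = coeff n (Polynomial.aeval g (trunc (n+1) f₁) * Polynomial.aeval g (trunc (n+1) f₂)) := by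
        rw [map_mul]
    _ = coeff n (pcomp f₁ g * pcomp f₂ g) := by
        rw [PowerSeries.coeff_mul, PowerSeries.coeff_mul]
        refine Finset.sum_congr rfl ?_
        rintro ⟨a, b⟩ hab
        rw [Finset.HasAntidiagonal.mem_antidiagonal] at hab
        rw [← coeff_pcomp_eq hg (show a < n+1 by omega),
          ← coeff_pcomp_eq hg (show b < n+1 by omega)]

include hg in
theorem derivative_pcomp (f : PowerSeries ℚ) :
    d⁄dX ℚ (pcomp f g) = pcomp (d⁄dX ℚ f) g * d⁄dX ℚ g := by
  ext n
  rw [PowerSeries.coeff_derivative, coeff_pcomp_eq hg (Nat.lt_succ_self (n+1)),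
    ← PowerSeries.coeff_derivative, Derivation.map_aeval, smul_eq_mul]
  have : Polynomial.derivative (trunc (n+2) f) = trunc (n+1) (d⁄dX ℚ f) :=
    (trunc_derivative ..).symm
  rw [this, PowerSeries.coeff_mul, PowerSeries.coeff_mul]
  refine Finset.sum_congr rfl ?_
  rintro ⟨a, b⟩ hab
  rw [Finset.HasAntidiagonal.mem_antidiagonal] at hab
  rw [← coeff_pcomp_eq hg (show a < n+1 by omega)]

/-! ### Coefficient recurrences -/

noncomputable def cq (j : ℕ) : ℚ :=
  if j = 0 then 0 else (2 : ℚ) ^ (2 * j - 1) / ((j : ℚ) ^ 2 * ((2 * j).choose j : ℚ))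

noncomputable def cp (j : ℕ) : ℚ :=
  if j = 0 then 0 else (-1 : ℚ) ^ (j + 1) * 2 ^ (2 * j - 1) / ((2 * j).factorial : ℚ)

theorem coeff_q (j : ℕ) : coeff j qArcsinSq = cq j := by simp [qArcsinSq, cq]
theorem coeff_p (j : ℕ) : coeff j pSinSq = cp j := by simp [pSinSq, cp]
theorem cq_zero : cq 0 = 0 := rfl
theorem cp_zero : cp 0 = 0 := rfl
theorem cq_one : cq 1 = 1 := by norm_num [cq]
theorem cp_one : cp 1 = 1 := by norm_num [cp]

theorem choose_ne (k : ℕ) : (((2 * k).choose k : ℚ)) ≠ 0 := by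
  have := Nat.choose_pos (show k ≤ 2 * k by omega)
  positivity

theorem central_succ (k : ℕ) :
    ((k : ℚ) + 1) * ((2 * (k + 1)).choose (k + 1) : ℚ)
      = 2 * (2 * k + 1) * ((2 * k).choose k : ℚ) := by
  have h := Nat.succ_mul_centralBinom_succ k
  have : ((k + 1) * Nat.centralBinom (k + 1) : ℚ) = (2 * (2 * k + 1) * Nat.centralBinom k : ℚ) := by
    exact_mod_cast congrArg (Nat.cast : ℕ → ℚ) h
  simpa [Nat.centralBinom] using this

theorem cq_rec (k : ℕ) :
    ((k : ℚ) + 2) * (2 * k + 3) * cq (k + 2) = 2 * ((k : ℚ) + 1) ^ 2 * cq (k + 1) := by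
  have h1 := central_succ (k + 1)
  simp only [show k + 1 + 1 = k + 2 from rfl] at h1
  have hb1 := choose_ne (k + 1)
  have hb2 := choose_ne (k + 2)
  have hk1 : ((k : ℚ) + 1) ≠ 0 := by positivity
  have hk2 : ((k : ℚ) + 2) ≠ 0 := by positivity
  simp only [cq, if_neg (Nat.succ_ne_zero _)]
  have e1 : 2 * (k + 2) - 1 = 2 * k + 3 := by omega
  have e2 : 2 * (k + 1) - 1 = 2 * k + 1 := by omega
  rw [e1, e2]
  push_cast at h1 ⊢
  field_simp
  linear_combination (-4*(2:ℚ)^(2*k)) * h1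

theorem cp_rec (k : ℕ) :
    ((k : ℚ) + 2) * (2 * k + 3) * cp (k + 2) = -2 * cp (k + 1) := by
  have hf1 : ((2 * (k + 1)).factorial : ℚ) ≠ 0 := by positivity
  simp only [cp, if_neg (Nat.succ_ne_zero _)]
  have e1 : 2 * (k + 2) - 1 = 2 * k + 3 := by omega
  have e2 : 2 * (k + 1) - 1 = 2 * k + 1 := by omega
  have e3 : 2 * (k + 2) = (2 * (k + 1) + 1) + 1 := by omega
  rw [e1, e2, e3, Nat.factorial_succ, Nat.factorial_succ]
  push_cast
  field_simp
  ring

/-! ### The differential equations -/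

theorem Rq : d⁄dX ℚ qArcsinSq - 2*(X*d⁄dX ℚ qArcsinSq) + 2*(X*d⁄dX ℚ (d⁄dX ℚ qArcsinSq))
    - 2*(X^2*d⁄dX ℚ (d⁄dX ℚ qArcsinSq)) = 1 := by
  have h2 : ∀ (f : ℚ⟦X⟧) (n : ℕ), coeff n (2*f) = 2 * coeff n f := fun f n => by
    rw [two_mul, map_add, two_mul]
  ext n
  simp only [map_sub, map_add, PowerSeries.coeff_one, h2]
  rcases n with _ | m
  · norm_num [coeff_derivative, coeff_q, cq_one, coeff_zero_X_mul, coeff_X_pow_mul']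
  · rw [coeff_succ_X_mul, coeff_succ_X_mul, coeff_X_pow_mul']
    rcases m with _ | j
    · norm_num [coeff_derivative, coeff_q, cq, Nat.choose]
    · rw [if_pos (by omega : 2 ≤ j + 1 + 1)]
      simp only [coeff_derivative, coeff_q, show j + 1 + 1 - 2 = j from by omega]
      have h := cq_rec (j + 1)
      push_cast at h ⊢
      ring_nf
      ring_nf at h
      linear_combination h

theorem Rp : d⁄dX ℚ pSinSq + 2*(X*d⁄dX ℚ (d⁄dX ℚ pSinSq)) + 2*pSinSq = 1 := by
  have h2 : ∀ (f : ℚ⟦X⟧) (n : ℕ), coeff n (2*f) = 2 * coeff n f := fun f n => by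
    rw [two_mul, map_add, two_mul]
  ext n
  simp only [map_add, PowerSeries.coeff_one, h2]
  rcases n with _ | m
  · norm_num [coeff_derivative, coeff_p, cp_one, coeff_zero_X_mul, cp]
  · rw [coeff_succ_X_mul]
    simp only [coeff_derivative, coeff_p]
    have h := cp_rec m
    push_cast at h ⊢
    linear_combination h

theorem hq0 : constantCoeff qArcsinSq = 0 := by
  rw [← coeff_zero_eq_constantCoeff, coeff_q, cq_zero]

/-- The key first order identity: `(X - X²)·q'² = q`. -/
theorem hI : (X - X^2) * (d⁄dX ℚ qArcsinSq)^2 = qArcsinSq := by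
  apply PowerSeries.derivative.ext
  · have expand : d⁄dX ℚ ((X - X^2) * (d⁄dX ℚ qArcsinSq)^2)
        = (1 - 2*X)*(d⁄dX ℚ qArcsinSq)^2
          + (X - X^2)*(2*(d⁄dX ℚ qArcsinSq)*(d⁄dX ℚ (d⁄dX ℚ qArcsinSq))) := by
      simp [Derivation.leibniz, Derivation.leibniz_pow, smul_eq_mul]
      ring
    rw [expand]
    linear_combination (d⁄dX ℚ qArcsinSq) * Rq
  · simp [hq0]

end ArcAux

open ArcAux Finset

/-- `q(t) = Σ_{j≥1} 2^{2j−1} t^j/(j²·C(2j,j))` is the compositional inverse of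
`p(x) = Σ_{j≥1}(−1)^{j+1}2^{2j−1}x^j/(2j)!`, i.e. `p(q(t)) = t`. -/
theorem arcsin_squared_reversion : pcomp pSinSq qArcsinSq = PowerSeries.X := by
  set q := qArcsinSq with hqdef
  set Q' := d⁄dX ℚ q with hQ'def
  have hg : constantCoeff q = 0 := hq0
  set F := pcomp pSinSq q with hFdef
  set P₁ := pcomp (d⁄dX ℚ pSinSq) q with hP₁def
  set P₂ := pcomp (d⁄dX ℚ (d⁄dX ℚ pSinSq)) q with hP₂def
  set W := P₁ * Q' with hWdef
  -- constant coefficients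
  have hQ'0 : coeff 0 Q' = 1 := by
    rw [hQ'def, coeff_derivative, coeff_q, cq_one]; norm_num
  have hQ'ne : Q' ≠ 0 := fun h => by rw [h] at hQ'0; simp at hQ'0
  -- composed p-ODE
  have hRpc : P₁ + 2*(q*P₂) + 2*F = 1 := by
    have h := congrArg (fun f => pcomp f q) Rp
    simpa only [pcomp_add, pcomp_mul hg, pcomp_X hg, pcomp_one, pcomp_two] using h
  -- derivatives
  have hDF : d⁄dX ℚ F = W := derivative_pcomp hg pSinSq
  have hDP₁ : d⁄dX ℚ P₁ = P₂ * Q' := derivative_pcomp hg _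
  have hDW : d⁄dX ℚ W = P₂ * Q'^2 + P₁ * d⁄dX ℚ Q' := by
    rw [hWdef, Derivation.leibniz, smul_eq_mul, smul_eq_mul, hDP₁]
    ring
  -- the first-order relation for W
  have hIV : 2*(X - X^2) * d⁄dX ℚ W = (1 - 2*F) - (1 - 2*X)*W := by
    have hq_eq : (X - X^2) * Q'^2 = q := hI
    apply mul_left_cancel₀ (pow_ne_zero 2 hQ'ne)
    have hRq := Rq
    rw [← hqdef, ← hQ'def] at hRq
    linear_combination ((1-2*X)*Q'^2) * hWdef
      + (2*(d⁄dX ℚ W) - 2*P₁*(d⁄dX ℚ Q')) * hq_eq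
      + (2*q) * hDW + Q'^2 * hRpc + (P₁*Q'^2) * hRq
  -- helper for derivatives of numeral multiples
  have D2 : ∀ x : ℚ⟦X⟧, d⁄dX ℚ (2*x) = 2 * d⁄dX ℚ x := fun x => by
    rw [two_mul, map_add, two_mul]
  -- differentiate hIV to get a second-order ODE for W
  have hW2 : 2*((X - X^2) * d⁄dX ℚ (d⁄dX ℚ W)) + 3*((1 - 2*X) * d⁄dX ℚ W) = 0 := by
    have h := congrArg (⇑(d⁄dX ℚ)) hIV
    have e1 : d⁄dX ℚ (2*(X - X^2) * d⁄dX ℚ W)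
        = 2*((X - X^2) * d⁄dX ℚ (d⁄dX ℚ W)) + (2 - 4*X) * d⁄dX ℚ W := by
      rw [show (2:ℚ⟦X⟧)*(X - X^2) * d⁄dX ℚ W = 2*((X - X^2) * d⁄dX ℚ W) from by ring, D2,
        Derivation.leibniz]
      simp only [smul_eq_mul, map_sub, derivative_X, Derivation.leibniz_pow, pow_one,
        Nat.cast_ofNat, nsmul_eq_mul]
      ring
    have e2 : d⁄dX ℚ ((1 - 2*F) - (1 - 2*X)*W) = -((1 - 2*X) * d⁄dX ℚ W) := by
      rw [map_sub, map_sub, D2, Derivation.leibniz, map_sub, D2]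
      simp only [Derivation.map_one_eq_zero, derivative_X, smul_eq_mul, hDF]
      ring
    linear_combination h - e1 + e2
  -- expanded form of the ODE
  have hC2 : (C 2 : ℚ⟦X⟧) = 2 := map_ofNat _ 2
  have hC3 : (C 3 : ℚ⟦X⟧) = 3 := map_ofNat _ 3
  have hC6 : (C 6 : ℚ⟦X⟧) = 6 := map_ofNat _ 6
  have hW2' : C 2 * (X * d⁄dX ℚ (d⁄dX ℚ W)) - C 2 * (X^2 * d⁄dX ℚ (d⁄dX ℚ W))
      + C 3 * (d⁄dX ℚ W) - C 6 * (X * d⁄dX ℚ W) = 0 := by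
    rw [hC2, hC3, hC6]
    linear_combination hW2
  -- the coefficient recurrence for W
  have hw : ∀ m : ℕ, ((m:ℚ)+1)*(2*(m:ℚ)+3) * coeff (m+1) W
      = 2*(m:ℚ)*((m:ℚ)+2) * coeff m W := by
    intro m
    have h := congrArg (coeff m) hW2'
    simp only [map_sub, map_add, PowerSeries.coeff_C_mul, map_zero] at h
    rcases m with _ | j
    · simp only [coeff_zero_X_mul, PowerSeries.coeff_X_pow_mul', if_neg (by omega : ¬ 2 ≤ 0),
        coeff_derivative, mul_zero, sub_zero] at h
      push_cast at h ⊢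
      linarith [h]
    · rw [coeff_succ_X_mul, coeff_succ_X_mul, PowerSeries.coeff_X_pow_mul'] at h
      rcases j with _ | i
      · simp only [if_neg (by omega : ¬ 2 ≤ 1), coeff_derivative] at h
        push_cast at h ⊢
        linarith [h]
      · rw [if_pos (by omega : 2 ≤ i + 1 + 1)] at h
        simp only [coeff_derivative, show i + 1 + 1 - 2 = i from by omega] at h
        push_cast at h ⊢
        linear_combination h
  -- all higher coefficients of W vanish
  have hwzero : ∀ n : ℕ, coeff (n+1) W = 0 := by
    intro n
    induction n with
    | zero =>
      have h := hw 0
      push_cast at h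
      linarith [h]
    | succ n ih =>
      have h := hw (n+1)
      rw [ih] at h
      push_cast at h
      have hne : ((n:ℚ)+1+1)*(2*((n:ℚ)+1)+3) ≠ 0 := by positivity
      have h0 : (((n:ℚ)+1+1)*(2*((n:ℚ)+1)+3)) * coeff (n+1+1) W = 0 := by linarith
      exact (mul_eq_zero.mp h0).resolve_left hne
  -- W = 1
  have hW0 : coeff 0 W = 1 := by
    have hm : coeff 0 W = coeff 0 P₁ * coeff 0 Q' := by
      simp only [hWdef, coeff_zero_eq_constantCoeff, map_mul]
    rw [hm, hQ'0, mul_one, hP₁def, coeff_pcomp, Finset.sum_range_one]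
    simp [coeff_derivative, coeff_p, cp_one]
  have hWone : W = 1 := by
    ext n
    rcases n with _ | n
    · simp [hW0]
    · simp [hwzero n]
  -- conclude
  apply PowerSeries.derivative.ext
  · rw [hDF, hWone, derivative_X]
  · rw [constantCoeff_X, ← coeff_zero_eq_constantCoeff, hFdef, coeff_pcomp]
    simp [coeff_p, cp_zero]
end

section
/- The formal power series q(x) = Σ_{j≥1} 2^{2j−1} x^j/(j²·C(2j,j)) satisfies the formal differential equation (x² − x)·q''(x) + (x − 1/2)·q'(x) + 1/2 = 0. -/
open PowerSeries

lemma coeff_qArcsinSq (n : ℕ) :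
    PowerSeries.coeff (R := ℚ) n qArcsinSq =
      if n = 0 then 0 else (2 : ℚ) ^ (2 * n - 1) / ((n : ℚ) ^ 2 * (n.centralBinom : ℚ)) := by
  rw [qArcsinSq, PowerSeries.coeff_mk, Nat.centralBinom]

lemma cb_cast (n : ℕ) :
    ((n : ℚ) + 1) * ((n + 1).centralBinom : ℚ) = 2 * (2 * n + 1) * (n.centralBinom : ℚ) := by
  exact_mod_cast congrArg (Nat.cast : ℕ → ℚ) (Nat.succ_mul_centralBinom_succ n)

lemma coeff_derivativeFun' (f : PowerSeries ℚ) (n : ℕ) :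
    PowerSeries.coeff n f.derivativeFun = PowerSeries.coeff (n + 1) f * (n + 1) :=
  PowerSeries.coeff_derivative f n

/-- `q(x) = Σ_{j≥1} 2^{2j−1} x^j/(j²·C(2j,j))` satisfies the formal differential
equation `(x² − x)·q'' + (x − 1/2)·q' + 1/2 = 0`. -/
theorem arcsin_squared_ODE :
    (PowerSeries.X ^ 2 - PowerSeries.X) * qArcsinSq.derivativeFun.derivativeFun +
      (PowerSeries.X - PowerSeries.C (R := ℚ) (1 / 2)) * qArcsinSq.derivativeFun +
      PowerSeries.C (R := ℚ) (1 / 2) = 0 := by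
  have hXmul : ∀ (f : PowerSeries ℚ) (n : ℕ),
      PowerSeries.coeff (R := ℚ) n (PowerSeries.X * f) =
        if 1 ≤ n then PowerSeries.coeff (R := ℚ) (n - 1) f else 0 := by
    intro f n
    rw [mul_comm, ← pow_one (PowerSeries.X (R := ℚ)), PowerSeries.coeff_mul_X_pow']
  have hX2mul : ∀ (f : PowerSeries ℚ) (n : ℕ),
      PowerSeries.coeff (R := ℚ) n (PowerSeries.X ^ 2 * f) =
        if 2 ≤ n then PowerSeries.coeff (R := ℚ) (n - 2) f else 0 := by
    intro f n
    rw [mul_comm, PowerSeries.coeff_mul_X_pow']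
  ext n
  match n with
  | 0 =>
    simp only [map_add, map_sub, sub_mul, map_zero, hXmul, hX2mul,
      PowerSeries.coeff_C_mul, coeff_derivativeFun', coeff_qArcsinSq,
      PowerSeries.coeff_C]
    norm_num [Nat.centralBinom, Nat.choose]
  | 1 =>
    simp only [map_add, map_sub, sub_mul, map_zero, hXmul, hX2mul,
      PowerSeries.coeff_C_mul, coeff_derivativeFun', coeff_qArcsinSq,
      PowerSeries.coeff_C]
    norm_num [Nat.centralBinom, show Nat.choose 4 2 = 6 from rfl]
  | (m + 2) =>
    simp only [map_add, map_sub, sub_mul, map_zero, hXmul, hX2mul,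
      PowerSeries.coeff_C_mul, coeff_derivativeFun', coeff_qArcsinSq,
      PowerSeries.coeff_C, Nat.add_sub_cancel,
      show m + 2 - 2 = m from rfl, show m + 2 - 1 = m + 1 from rfl]
    norm_num
    have e1 : 2 * (m + 1 + 1) - 1 = 2 * m + 3 := by omega
    have e2 : 2 * (m + 1 + 1 + 1) - 1 = 2 * m + 5 := by omega
    have e3 : 2 * (m + 2 + 1) - 1 = 2 * m + 5 := by omega
    have hm3 : ((m : ℚ) + 3) ≠ 0 := by positivity
    have hc3 : (((m + 3)).centralBinom : ℚ)
        = 2 * (2 * (m + 2) + 1) * ((m + 2).centralBinom : ℚ) / ((m : ℚ) + 3) := by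
      rw [eq_div_iff hm3]
      have := cb_cast (m + 2)
      push_cast at this ⊢
      linarith
    have hc2 : ((m + 2).centralBinom : ℚ) ≠ 0 := by
      exact_mod_cast (Nat.centralBinom_ne_zero (m + 2))
    have hpow : (2 : ℚ) ^ (2 * m + 5) = 4 * 2 ^ (2 * m + 3) := by
      rw [show 2 * m + 5 = 2 * m + 3 + 2 from rfl, pow_add]; ring
    simp only [show m + 1 + 1 = m + 2 from rfl, show m + 1 + 1 + 1 = m + 3 from rfl,
      show m + 2 + 1 = m + 3 from rfl, e1, e2, e3, hc3, hpow]
    have hm2 : ((m : ℚ) + 2) ≠ 0 := by positivity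
    have h2m5 : (2 * (m : ℚ) + 5) ≠ 0 := by positivity
    field_simp
    ring
end

section
/- For λ in the base field, the map (A, α) ↦ (A·(α/x)^λ, α) is a group automorphism of 𝒮ℐ = 𝒮𝒰 ⋊ 𝒮𝒟, where for α ∈ x + x²K[[x]], α/x ∈ 1 + xK[[x]] and (α/x)^λ = exp(λ·log(α/x)). -/
open PowerSeries

/-- The formal logarithm `log A = Σ_{n≥1} (−1)^{n+1}(A−1)^n/n`. -/
noncomputable def plog {K : Type*} [Field K] [CharZero K] (A : PowerSeries K) :
    PowerSeries K :=
  pcomp (PowerSeries.mk fun n => (-1 : K) ^ (n + 1) / (n : K)) (A - 1)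

/-- The formal power `A^λ = exp(λ·log A)`. -/
noncomputable def ppow {K : Type*} [Field K] [CharZero K] (lam : K) (A : PowerSeries K) :
    PowerSeries K :=
  pcomp (PowerSeries.exp K) (lam • plog A)

/-- Division of a power series by `x`: the series `α/x` (discarding the constant term). -/
noncomputable def pdivX {K : Type*} [CommRing K] (f : PowerSeries K) : PowerSeries K :=
  PowerSeries.mk fun n => PowerSeries.coeff (n + 1) f

/-- The product of the semidirect product `𝒮𝒰 ⋊ 𝒮𝒟`:
`(A,α)(B,β) = (A·(B∘α), β∘α)`. -/
noncomputable def simul {K : Type*} [CommRing K]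
    (p q : PowerSeries K × PowerSeries K) : PowerSeries K × PowerSeries K :=
  (p.1 * pcomp q.1 p.2, pcomp q.2 p.2)

/-- The group `𝒮ℐ = 𝒮𝒰 ⋊ 𝒮𝒟` as a set:
pairs `(A, α)` with `A ∈ 1 + xK[[x]]` and `α ∈ x + x²K[[x]]`. -/
def SIset (K : Type*) [Field K] : Set (PowerSeries K × PowerSeries K) :=
  {p | PowerSeries.constantCoeff p.1 = 1 ∧ PowerSeries.constantCoeff p.2 = 0 ∧
    PowerSeries.coeff 1 p.2 = 1}

section Aux
open Finset

variable {K : Type*} [Field K]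

lemma coeff_pcomp (f g : PowerSeries K) (n : ℕ) :
    coeff n (pcomp f g) = ∑ k ∈ range (n + 1), coeff k f * coeff n (g ^ k) := by
  simp [pcomp]

lemma coeff_pdivX (f : PowerSeries K) (n : ℕ) : coeff n (pdivX f) = coeff (n+1) f := by
  simp [pdivX]

lemma X_mul_pdivX {f : PowerSeries K} (hf : constantCoeff f = 0) : X * pdivX f = f := by
  ext n
  cases n with
  | zero => simp [coeff_zero_eq_constantCoeff, hf]
  | succ n => rw [coeff_succ_X_mul, coeff_pdivX]

lemma pdivX_X_mul (f : PowerSeries K) : pdivX (X * f) = f := by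
  ext n; rw [coeff_pdivX, coeff_succ_X_mul]

lemma coeff_pow_eq_zero {g : PowerSeries K} (hg : constantCoeff g = 0) {n k : ℕ}
    (h : n < k) : coeff n (g ^ k) = 0 := by
  rw [← X_mul_pdivX hg, mul_pow, coeff_mul]
  apply Finset.sum_eq_zero
  rintro ⟨a, b⟩ hab
  rw [Finset.HasAntidiagonal.mem_antidiagonal] at hab
  have ha : a ≠ k := by omega
  rw [coeff_X_pow, if_neg ha, zero_mul]

lemma coeff_pcomp_ext {g : PowerSeries K} (hg : constantCoeff g = 0)
    (f : PowerSeries K) {n N : ℕ} (hnN : n < N) :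
    coeff n (pcomp f g) = ∑ k ∈ range N, coeff k f * coeff n (g ^ k) := by
  rw [coeff_pcomp]
  apply Finset.sum_subset
  · exact Finset.range_subset_range.2 hnN
  · intro k _ hk
    rw [Finset.mem_range, not_lt] at hk
    rw [coeff_pow_eq_zero hg (by omega), mul_zero]

lemma coeff_eval₂ {g : PowerSeries K} (hg : constantCoeff g = 0)
    (P : Polynomial K) {n N : ℕ} (hnN : n < N) :
    coeff n (P.eval₂ C g) = ∑ k ∈ range N, P.coeff k * coeff n (g ^ k) := by
  have hM : P.natDegree < max N (P.natDegree + 1) := by omega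
  rw [Polynomial.eval₂_eq_sum_range' C hM g, map_sum]
  simp only [coeff_C_mul]
  symm
  apply Finset.sum_subset
  · exact Finset.range_subset_range.2 (le_max_left _ _)
  · intro k _ hk
    rw [Finset.mem_range, not_lt] at hk
    rw [coeff_pow_eq_zero hg (by omega), mul_zero]

lemma coeff_pcomp_eq_eval₂ {g : PowerSeries K} (hg : constantCoeff g = 0)
    (f : PowerSeries K) {n N : ℕ} (hnN : n < N) :
    coeff n (pcomp f g) = coeff n ((trunc N f).eval₂ C g) := by
  rw [coeff_pcomp_ext hg f hnN, coeff_eval₂ hg _ hnN]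
  apply Finset.sum_congr rfl
  intro k hk
  rw [coeff_trunc, if_pos (Finset.mem_range.1 hk)]

lemma pcomp_mul {g : PowerSeries K} (hg : constantCoeff g = 0) (f f' : PowerSeries K) :
    pcomp (f * f') g = pcomp f g * pcomp f' g := by
  ext n
  rw [coeff_pcomp_eq_eval₂ hg (f * f') (Nat.lt_succ_self n)]
  have h1 : coeff n ((trunc (n+1) (f * f')).eval₂ C g)
      = coeff n ((trunc (n+1) f * trunc (n+1) f').eval₂ C g) := by
    rw [coeff_eval₂ hg _ (Nat.lt_succ_self n), coeff_eval₂ hg _ (Nat.lt_succ_self n)]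
    apply Finset.sum_congr rfl
    intro k hk
    congr 1
    rw [coeff_trunc, if_pos (Finset.mem_range.1 hk),
      coeff_mul_eq_coeff_trunc_mul_trunc f f' (Finset.mem_range.1 hk), ← Polynomial.coe_mul,
      Polynomial.coeff_coe]
  rw [h1, Polynomial.eval₂_mul, coeff_mul, coeff_mul]
  apply Finset.sum_congr rfl
  rintro ⟨a, b⟩ hab
  rw [Finset.HasAntidiagonal.mem_antidiagonal] at hab
  rw [← coeff_pcomp_eq_eval₂ hg f (by omega : a < n + 1),
    ← coeff_pcomp_eq_eval₂ hg f' (by omega : b < n + 1)]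

lemma pcomp_one (g : PowerSeries K) : pcomp 1 g = 1 := by
  ext n
  rw [coeff_pcomp, Finset.sum_eq_single 0]
  · simp
  · intro k _ hk
    rw [coeff_one, if_neg hk, zero_mul]
  · intro h; exact absurd (Finset.mem_range.2 (Nat.succ_pos n)) h

lemma pcomp_pow {g : PowerSeries K} (hg : constantCoeff g = 0) (f : PowerSeries K) (k : ℕ) :
    pcomp (f ^ k) g = (pcomp f g) ^ k := by
  induction k with
  | zero => simpa using pcomp_one g
  | succ k ih => rw [pow_succ, pcomp_mul hg, ih, pow_succ]

lemma pcomp_add (f f' g : PowerSeries K) : pcomp (f + f') g = pcomp f g + pcomp f' g := by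
  ext n
  simp [coeff_pcomp, add_mul, Finset.sum_add_distrib]

lemma pcomp_smul (c : K) (f g : PowerSeries K) : pcomp (c • f) g = c • pcomp f g := by
  ext n
  simp [coeff_pcomp, Finset.mul_sum, mul_assoc]

lemma pcomp_sub (f f' g : PowerSeries K) : pcomp (f - f') g = pcomp f g - pcomp f' g := by
  ext n
  simp [coeff_pcomp, sub_mul, Finset.sum_sub_distrib]

lemma pcomp_X {g : PowerSeries K} (hg : constantCoeff g = 0) : pcomp X g = g := by
  ext n
  rw [coeff_pcomp, Finset.sum_eq_single 1]
  · cases n with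
    | zero => simp [hg]
    | succ n => simp
  · intro k _ hk
    rw [coeff_X, if_neg hk, zero_mul]
  · intro h
    rw [Finset.mem_range, not_lt] at h
    have hn : n = 0 := by omega
    subst hn
    simp [hg]

lemma constantCoeff_pcomp (f g : PowerSeries K) :
    constantCoeff (pcomp f g) = constantCoeff f := by
  have := coeff_pcomp f g 0
  simpa using this

lemma pcomp_assoc {g h : PowerSeries K} (hg : constantCoeff g = 0)
    (hh : constantCoeff h = 0) (f : PowerSeries K) :
    pcomp (pcomp f g) h = pcomp f (pcomp g h) := by
  ext n
  rw [coeff_pcomp, coeff_pcomp]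
  calc ∑ k ∈ range (n+1), coeff k (pcomp f g) * coeff n (h ^ k)
      = ∑ k ∈ range (n+1), ∑ i ∈ range (n+1),
          coeff i f * coeff k (g ^ i) * coeff n (h ^ k) := by
        apply Finset.sum_congr rfl
        intro k hk
        rw [coeff_pcomp_ext hg f (Finset.mem_range.1 hk), Finset.sum_mul]
    _ = ∑ i ∈ range (n+1), coeff i f *
          ∑ k ∈ range (n+1), coeff k (g ^ i) * coeff n (h ^ k) := by
        rw [Finset.sum_comm]
        apply Finset.sum_congr rfl
        intro i _
        rw [Finset.mul_sum]
        apply Finset.sum_congr rfl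
        intro k _
        ring
    _ = ∑ i ∈ range (n+1), coeff i f * coeff n ((pcomp g h) ^ i) := by
        apply Finset.sum_congr rfl
        intro i _
        rw [← coeff_pcomp, pcomp_pow hh]

lemma D_eval₂ (g : PowerSeries K) (P : Polynomial K) :
    d⁄dX K (P.eval₂ C g) = (Polynomial.derivative P).eval₂ C g * d⁄dX K g := by
  induction P using Polynomial.induction_on' with
  | add p q hp hq =>
    rw [Polynomial.eval₂_add, map_add, hp, hq, Polynomial.derivative_add,
      Polynomial.eval₂_add, add_mul]
  | monomial m a =>
    rw [Polynomial.eval₂_monomial, Polynomial.derivative_monomial, Polynomial.eval₂_monomial]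
    rw [Derivation.leibniz, Derivation.leibniz_pow, derivative_C]
    simp only [smul_zero, add_zero, smul_eq_mul, smul_smul]
    rw [map_mul, map_natCast]
    ring

lemma D_pcomp {g : PowerSeries K} (hg : constantCoeff g = 0) (f : PowerSeries K) :
    d⁄dX K (pcomp f g) = pcomp (d⁄dX K f) g * d⁄dX K g := by
  ext n
  rw [coeff_derivative, coeff_pcomp_eq_eval₂ hg f (by omega : n + 1 < n + 2),
    ← coeff_derivative, D_eval₂, ← trunc_derivative]
  rw [coeff_mul, coeff_mul]
  apply Finset.sum_congr rfl
  rintro ⟨a, b⟩ hab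
  rw [Finset.HasAntidiagonal.mem_antidiagonal] at hab
  rw [← coeff_pcomp_eq_eval₂ hg (d⁄dX K f) (by omega : a < n + 1)]

variable [CharZero K]

lemma D_exp : d⁄dX K (exp K) = exp K := by
  ext n
  rw [coeff_derivative, coeff_exp, coeff_exp]
  rw [show ((n : K) + 1) = algebraMap ℚ K ((n : ℚ) + 1) by push_cast; ring, ← map_mul]
  congr 1
  rw [Nat.factorial_succ]
  have h1 : (Nat.factorial (n+1) : ℚ) ≠ 0 := by positivity
  have h2 : ((n : ℚ) + 1) ≠ 0 := by positivity
  field_simp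
  push_cast
  ring

lemma one_add_X_mul_G : (1 + X) * (PowerSeries.mk fun n => (-1 : K) ^ n) = 1 := by
  ext n
  rw [add_mul, one_mul, map_add]
  cases n with
  | zero => simp
  | succ n => simp [coeff_succ_X_mul, pow_succ]

lemma D_L : d⁄dX K (PowerSeries.mk fun n => (-1 : K) ^ (n + 1) / (n : K))
    = PowerSeries.mk fun n => (-1 : K) ^ n := by
  ext n
  rw [coeff_derivative, coeff_mk, coeff_mk]
  have h : ((n : K) + 1) ≠ 0 := by
    have := Nat.cast_add_one_ne_zero (R := K) n; simpa using this
  rw [show ((n : ℕ) + 1 : ℕ) = n + 1 by rfl]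
  push_cast
  rw [div_mul_cancel₀ _ h]
  ring

lemma constantCoeff_plog (w : PowerSeries K) : constantCoeff (plog w) = 0 := by
  rw [plog, constantCoeff_pcomp]
  simp

lemma constantCoeff_ppow (lam : K) (w : PowerSeries K) :
    constantCoeff (ppow lam w) = 1 := by
  rw [ppow, constantCoeff_pcomp, constantCoeff_exp]

lemma w_mul_D_plog {w : PowerSeries K} (hw : constantCoeff w = 1) :
    w * d⁄dX K (plog w) = d⁄dX K w := by
  have hw1 : constantCoeff (w - 1) = 0 := by
    rw [map_sub, hw, map_one, sub_self]
  have key : w * pcomp (PowerSeries.mk fun n => (-1 : K) ^ n) (w - 1) = 1 := by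
    have := congrArg (fun t => pcomp t (w - 1)) (one_add_X_mul_G (K := K))
    rw [pcomp_mul hw1, pcomp_one, pcomp_add, pcomp_one, pcomp_X hw1] at this
    calc w * pcomp (PowerSeries.mk fun n => (-1 : K) ^ n) (w - 1)
        = (1 + (w - 1)) * pcomp (PowerSeries.mk fun n => (-1 : K) ^ n) (w - 1) := by ring_nf
      _ = 1 := this
  rw [plog, D_pcomp hw1, D_L]
  have hD : d⁄dX K (w - 1) = d⁄dX K w := by
    rw [map_sub, Derivation.map_one_eq_zero, sub_zero]
  rw [hD, ← mul_assoc, key, one_mul]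

lemma ppow_deriv (lam : K) {w : PowerSeries K} (hw : constantCoeff w = 1) :
    w * d⁄dX K (ppow lam w) = (C lam * d⁄dX K w) * ppow lam w := by
  have h0 : constantCoeff (lam • plog w) = 0 := by
    rw [smul_eq_C_mul, map_mul, constantCoeff_plog, mul_zero]
  rw [ppow, D_pcomp h0, D_exp, ← ppow]
  have hD : d⁄dX K (lam • plog w) = C lam * d⁄dX K (plog w) := by
    rw [smul_eq_C_mul, Derivation.leibniz, derivative_C]
    simp [smul_eq_mul]
  rw [hD]
  have := w_mul_D_plog hw
  calc w * (ppow lam w * (C lam * d⁄dX K (plog w)))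
      = C lam * (w * d⁄dX K (plog w)) * ppow lam w := by ring
    _ = (C lam * d⁄dX K w) * ppow lam w := by rw [this]

lemma ode_unique {u w y z : PowerSeries K} (hu : constantCoeff u ≠ 0)
    (hz0 : constantCoeff z ≠ 0) (hy0 : constantCoeff y = constantCoeff z)
    (hy : u * d⁄dX K y = w * y) (hz : u * d⁄dX K z = w * z) : y = z := by
  have hzz : z * z⁻¹ = 1 := PowerSeries.mul_inv_cancel z hz0
  have hzne : z ≠ 0 := fun h => hz0 (by rw [h, map_zero])
  have hune : u ≠ 0 := fun h => hu (by rw [h, map_zero])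
  suffices hyz : y * z⁻¹ = 1 by
    calc y = y * (z * z⁻¹) := by rw [hzz, mul_one]
      _ = (y * z⁻¹) * z := by ring
      _ = z := by rw [hyz, one_mul]
  apply derivative.ext
  · rw [Derivation.map_one_eq_zero]
    have key : u * (z * z) * d⁄dX K (y * z⁻¹) = 0 := by
      rw [Derivation.leibniz, derivative_inv']
      simp only [smul_eq_mul]
      linear_combination (z * z * z⁻¹) * hy - (z * z * z⁻¹ * z⁻¹ * y) * hz -
        (w * y * z * (1 + z * z⁻¹)) * hzz + (u * d⁄dX K y * z) * hzz -
        (u * y * d⁄dX K z * (1 + z * z⁻¹)) * hzz + (u * y * d⁄dX K z) * hzz +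
        (- u * z * d⁄dX K y + u * z * y * z⁻¹ * d⁄dX K z + z * y * w) * hzz
    rcases mul_eq_zero.1 key with h | h
    · rcases mul_eq_zero.1 h with h' | h'
      · exact absurd h' hune
      · exact absurd h' (mul_ne_zero hzne hzne)
    · exact h
  · rw [map_mul, constantCoeff_inv, hy0, map_one,
      mul_inv_cancel₀ hz0]

lemma ppowMul (lam : K) {u v : PowerSeries K} (hu : constantCoeff u = 1)
    (hv : constantCoeff v = 1) :
    ppow lam (u * v) = ppow lam u * ppow lam v := by
  have huv : constantCoeff (u * v) = 1 := by rw [map_mul, hu, hv, mul_one]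
  apply ode_unique (u := u * v) (w := C lam * d⁄dX K (u * v))
    (by rw [huv]; exact one_ne_zero)
    (by rw [map_mul, constantCoeff_ppow, constantCoeff_ppow, mul_one]; exact one_ne_zero)
    (by rw [constantCoeff_ppow, map_mul, constantCoeff_ppow, constantCoeff_ppow, mul_one])
    (ppow_deriv lam huv)
  have h1 := ppow_deriv lam hu
  have h2 := ppow_deriv lam hv
  rw [Derivation.leibniz, Derivation.leibniz]
  simp only [smul_eq_mul]
  linear_combination (v * ppow lam v) * h1 + (u * ppow lam u) * h2

lemma plog_pcomp {f g : PowerSeries K} (hf : constantCoeff f = 1)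
    (hg : constantCoeff g = 0) : pcomp (plog f) g = plog (pcomp f g) := by
  have hf1 : constantCoeff (f - 1) = 0 := by rw [map_sub, hf, map_one, sub_self]
  rw [plog, pcomp_assoc hf1 hg, plog, pcomp_sub, pcomp_one]

lemma ppow_pcomp (lam : K) {f g : PowerSeries K} (hf : constantCoeff f = 1)
    (hg : constantCoeff g = 0) : pcomp (ppow lam f) g = ppow lam (pcomp f g) := by
  have h0 : constantCoeff (lam • plog f) = 0 := by
    rw [smul_eq_C_mul, map_mul, constantCoeff_plog, mul_zero]
  rw [ppow, pcomp_assoc h0 hg, pcomp_smul, plog_pcomp hf hg, ← ppow]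

lemma pdivX_pcomp {a b : PowerSeries K} (ha : constantCoeff a = 0)
    (hb : constantCoeff b = 0) :
    pdivX (pcomp b a) = pdivX a * pcomp (pdivX b) a := by
  have h1 : pcomp b a = a * pcomp (pdivX b) a := by
    conv_lhs => rw [← X_mul_pdivX hb]
    rw [pcomp_mul ha, pcomp_X ha]
  have h2 : X * (pdivX a * pcomp (pdivX b) a) = a * pcomp (pdivX b) a := by
    rw [← mul_assoc, X_mul_pdivX ha]
  rw [h1, ← h2, pdivX_X_mul]

lemma constantCoeff_pdivX (f : PowerSeries K) :
    constantCoeff (pdivX f) = coeff 1 f := by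
  rw [← coeff_zero_eq_constantCoeff, coeff_pdivX]


end Aux

/-- For `λ` in the base field, the map `(A, α) ↦ (A·(α/x)^λ, α)` is a group automorphism
of `𝒮ℐ = 𝒮𝒰 ⋊ 𝒮𝒟`: it maps `𝒮ℐ` bijectively onto itself and is multiplicative for the
product `(A,α)(B,β) = (A·(B∘α), β∘α)`. -/
theorem SI_automorphism {K : Type*} [Field K] [CharZero K] (lam : K) :
    (∀ p ∈ SIset K,
      (p.1 * ppow lam (pdivX p.2), p.2) ∈ SIset K) ∧
    (∀ p ∈ SIset K, ∀ q ∈ SIset K,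
      ((simul p q).1 * ppow lam (pdivX (simul p q).2), (simul p q).2) =
        simul (p.1 * ppow lam (pdivX p.2), p.2) (q.1 * ppow lam (pdivX q.2), q.2)) ∧
    Set.BijOn (fun p : PowerSeries K × PowerSeries K =>
      (p.1 * ppow lam (pdivX p.2), p.2)) (SIset K) (SIset K) := by
  have hmem : ∀ p ∈ SIset K, (p.1 * ppow lam (pdivX p.2), p.2) ∈ SIset K := by
    rintro p ⟨h1, h2, h3⟩
    exact ⟨by rw [map_mul, h1, constantCoeff_ppow, mul_one], h2, h3⟩
  refine ⟨hmem, ?_, ?_, ?_, ?_⟩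
  · -- multiplicativity
    rintro p ⟨hp1, hp2, hp3⟩ q ⟨hq1, hq2, hq3⟩
    have hdp : constantCoeff (pdivX p.2) = 1 := by rw [constantCoeff_pdivX, hp3]
    have hdq : constantCoeff (pdivX q.2) = 1 := by rw [constantCoeff_pdivX, hq3]
    have hcq : constantCoeff (pcomp (pdivX q.2) p.2) = 1 := by
      rw [constantCoeff_pcomp, hdq]
    refine Prod.ext_iff.mpr ⟨?_, rfl⟩
    show (simul p q).1 * ppow lam (pdivX (simul p q).2)
        = (p.1 * ppow lam (pdivX p.2)) * pcomp (q.1 * ppow lam (pdivX q.2)) p.2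
    show (p.1 * pcomp q.1 p.2) * ppow lam (pdivX (pcomp q.2 p.2)) = _
    rw [pdivX_pcomp hp2 hq2, ppowMul lam hdp hcq,
      pcomp_mul hp2, ppow_pcomp lam hdq hp2]
    ring
  · -- MapsTo
    intro p hp; exact hmem p hp
  · -- InjOn
    rintro p hp q hq h
    simp only [Prod.mk.injEq] at h
    obtain ⟨h1', h2'⟩ := h
    rw [h2'] at h1'
    have hne : ppow lam (pdivX q.2) ≠ 0 := fun h0 => by
      have := constantCoeff_ppow lam (pdivX q.2)
      rw [h0, map_zero] at this
      exact zero_ne_one this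
    exact Prod.ext_iff.mpr ⟨mul_right_cancel₀ hne h1', h2'⟩
  · -- SurjOn
    rintro q ⟨hq1, hq2, hq3⟩
    have hdq : constantCoeff (ppow lam (pdivX q.2)) = 1 := constantCoeff_ppow _ _
    refine ⟨(q.1 * (ppow lam (pdivX q.2))⁻¹, q.2), ⟨?_, hq2, hq3⟩, ?_⟩
    · rw [map_mul, hq1, constantCoeff_inv, hdq, one_mul, inv_one]
    · show (q.1 * (ppow lam (pdivX q.2))⁻¹ * ppow lam (pdivX q.2), q.2) = q
      rw [mul_assoc, PowerSeries.inv_mul_cancel _ (by rw [hdq]; exact one_ne_zero), mul_one]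
end

section
/- Two sequences related by a binomial transform have the same Hankel transform: if a = (a_0, a_1, ...) is a sequence in a commutative ring, x an element of the ring, and b_k = Σ_{n=0}^{k} C(k,n)·x^{k−n}·a_n, then for every N ≥ 1, det((a_{i+j})_{0 ≤ i,j < N}) = det((b_{i+j})_{0 ≤ i,j < N}). -/
open Finset Matrix

private lemma fin_sum_choose {R : Type*} [CommRing R] {N i : ℕ} (hi : i < N) (x : R)
    (g : ℕ → R) :
    ∑ k : Fin N, ((i.choose k.val : ℕ) : R) * x ^ (i - k.val) * g k.val
      = ∑ k ∈ Finset.range (i + 1), ((i.choose k : ℕ) : R) * x ^ (i - k) * g k := by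
  rw [Fin.sum_univ_eq_sum_range (fun k => ((i.choose k : ℕ) : R) * x ^ (i - k) * g k)]
  symm
  apply Finset.sum_subset
  · intro k hk
    simp only [Finset.mem_range] at hk ⊢
    omega
  · intro k _ hk
    simp only [Finset.mem_range, not_lt] at hk
    rw [Nat.choose_eq_zero_of_lt (by omega)]
    simp

private lemma hankel_entry_key {R : Type*} [CommRing R] (a : ℕ → R) (x : R)
    (i j : ℕ) :
    ∑ n ∈ Finset.range (i + j + 1), ((i + j).choose n : R) * x ^ (i + j - n) * a n =
      ∑ p ∈ Finset.range (i + 1) ×ˢ Finset.range (j + 1),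
        (i.choose p.1 : R) * x ^ (i - p.1) * ((j.choose p.2 : R) * x ^ (j - p.2)) *
          a (p.1 + p.2) := by
  classical
  set F : ℕ × ℕ → R := fun p =>
    (i.choose p.1 : R) * (j.choose p.2 : R) * x ^ (i + j - (p.1 + p.2)) * a (p.1 + p.2)
    with hF
  have hLHS : ∑ n ∈ Finset.range (i + j + 1), ((i + j).choose n : R) * x ^ (i + j - n) * a n
      = ∑ p ∈ (Finset.range (i + j + 1)).biUnion Finset.HasAntidiagonal.antidiagonal, F p := by
    rw [Finset.sum_biUnion]
    · refine Finset.sum_congr rfl fun n hn => ?_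
      rw [Nat.add_choose_eq]
      push_cast
      rw [Finset.sum_mul, Finset.sum_mul]
      refine Finset.sum_congr rfl fun p hp => ?_
      have hp' : p.1 + p.2 = n := (Finset.HasAntidiagonal.mem_antidiagonal.mp hp)
      simp only [hF, hp']
    · intro s hs t ht hst
      simp only [Finset.mem_coe, Finset.mem_range] at hs ht
      refine Finset.disjoint_left.mpr fun p hps hpt => hst ?_
      have := Finset.HasAntidiagonal.mem_antidiagonal.mp hps
      have := Finset.HasAntidiagonal.mem_antidiagonal.mp hpt
      omega
  have hzero1 : ∀ p ∈ Finset.range (i + j + 1) ×ˢ Finset.range (i + j + 1),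
      p ∉ (Finset.range (i + j + 1)).biUnion Finset.HasAntidiagonal.antidiagonal → F p = 0 := by
    intro p _ hp
    have : ¬ (p.1 + p.2 ≤ i + j) := by
      intro h
      exact hp (Finset.mem_biUnion.mpr ⟨p.1 + p.2, Finset.mem_range.mpr (by omega),
        Finset.HasAntidiagonal.mem_antidiagonal.mpr rfl⟩)
    have : i < p.1 ∨ j < p.2 := by omega
    rcases this with h | h
    · simp [hF, Nat.choose_eq_zero_of_lt h]
    · simp [hF, Nat.choose_eq_zero_of_lt h]
  have hsub1 : (Finset.range (i + j + 1)).biUnion Finset.HasAntidiagonal.antidiagonal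
      ⊆ Finset.range (i + j + 1) ×ˢ Finset.range (i + j + 1) := by
    intro p hp
    obtain ⟨n, hn, hpn⟩ := Finset.mem_biUnion.mp hp
    have := Finset.HasAntidiagonal.mem_antidiagonal.mp hpn
    simp only [Finset.mem_range] at hn
    simp only [Finset.mem_product, Finset.mem_range]
    omega
  have hzero2 : ∀ p ∈ Finset.range (i + j + 1) ×ˢ Finset.range (i + j + 1),
      p ∉ Finset.range (i + 1) ×ˢ Finset.range (j + 1) → F p = 0 := by
    intro p _ hp
    simp only [Finset.mem_product, Finset.mem_range, not_and_or, not_lt] at hp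
    rcases hp with h | h
    · simp [hF, Nat.choose_eq_zero_of_lt (by omega : i < p.1)]
    · simp [hF, Nat.choose_eq_zero_of_lt (by omega : j < p.2)]
  have hsub2 : Finset.range (i + 1) ×ˢ Finset.range (j + 1)
      ⊆ Finset.range (i + j + 1) ×ˢ Finset.range (i + j + 1) := by
    intro p hp
    simp only [Finset.mem_product, Finset.mem_range] at hp ⊢
    omega
  rw [hLHS, Finset.sum_subset hsub1 hzero1, ← Finset.sum_subset hsub2 hzero2]
  refine Finset.sum_congr rfl fun p hp => ?_
  simp only [Finset.mem_product, Finset.mem_range] at hp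
  have hx : i + j - (p.1 + p.2) = (i - p.1) + (j - p.2) := by omega
  simp only [hF, hx, pow_add]
  ring

/-- Two sequences related by a binomial transform have the same Hankel transform:
if `b_k = Σ_{n=0}^{k} C(k,n)·x^{k−n}·a_n`, then for every `N ≥ 1` the `N×N` Hankel
determinants of `a` and `b` coincide. -/
theorem binomial_transform_hankel {R : Type*} [CommRing R]
    (a : ℕ → R) (x : R) (b : ℕ → R)
    (hb : ∀ k, b k = ∑ n ∈ Finset.range (k + 1), (k.choose n : R) * x ^ (k - n) * a n)
    (N : ℕ) (hN : 1 ≤ N) :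
    Matrix.det (Matrix.of fun i j : Fin N => a (i.val + j.val)) =
      Matrix.det (Matrix.of fun i j : Fin N => b (i.val + j.val)) := by
  classical
  set P : Matrix (Fin N) (Fin N) R :=
    Matrix.of (fun i j : Fin N => ((i.val.choose j.val : ℕ) : R) * x ^ (i.val - j.val))
    with hP
  have hPdet : P.det = 1 := by
    rw [Matrix.det_of_lowerTriangular]
    · simp [hP]
    · intro i j hij
      have hij' : (i : ℕ) < (j : ℕ) := hij
      simp only [hP, Matrix.of_apply]
      rw [Nat.choose_eq_zero_of_lt hij']
      simp
  have key : (Matrix.of fun i j : Fin N => b (i.val + j.val)) =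
      P * (Matrix.of fun i j : Fin N => a (i.val + j.val)) * Pᵀ := by
    ext i j
    simp only [Matrix.mul_apply, Matrix.transpose_apply, Matrix.of_apply, hP, hb]
    rw [hankel_entry_key a x i.val j.val, Finset.sum_product]
    have h1 : ∀ l : ℕ,
        (∑ k : Fin N, ((i.val.choose k.val : ℕ) : R) * x ^ (i.val - k.val) * a (k.val + l))
          = ∑ k ∈ Finset.range (i.val + 1),
              ((i.val.choose k : ℕ) : R) * x ^ (i.val - k) * a (k + l) :=
      fun l => fin_sum_choose i.isLt x (fun k => a (k + l))
    calc ∑ k ∈ Finset.range (i.val + 1), ∑ l ∈ Finset.range (j.val + 1),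
          ((i.val.choose k : ℕ) : R) * x ^ (i.val - k) *
            (((j.val.choose l : ℕ) : R) * x ^ (j.val - l)) * a (k + l)
        = ∑ l ∈ Finset.range (j.val + 1), ((j.val.choose l : ℕ) : R) * x ^ (j.val - l) *
            (∑ k ∈ Finset.range (i.val + 1),
              ((i.val.choose k : ℕ) : R) * x ^ (i.val - k) * a (k + l)) := by
          rw [Finset.sum_comm]
          refine Finset.sum_congr rfl fun l _ => ?_
          rw [Finset.mul_sum]
          exact Finset.sum_congr rfl fun k _ => by ring
      _ = ∑ l : Fin N, ((j.val.choose l.val : ℕ) : R) * x ^ (j.val - l.val) *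
            (∑ k ∈ Finset.range (i.val + 1),
              ((i.val.choose k : ℕ) : R) * x ^ (i.val - k) * a (k + l.val)) := by
          exact (fin_sum_choose j.isLt x (fun l => ∑ k ∈ Finset.range (i.val + 1),
            ((i.val.choose k : ℕ) : R) * x ^ (i.val - k) * a (k + l))).symm
      _ = ∑ l : Fin N,
            (∑ k : Fin N, ((i.val.choose k.val : ℕ) : R) * x ^ (i.val - k.val) *
              a (k.val + l.val)) * (((j.val.choose l.val : ℕ) : R) * x ^ (j.val - l.val)) := by
          refine Finset.sum_congr rfl fun l _ => ?_
          rw [h1 l.val]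
          ring
  rw [key, Matrix.det_mul, Matrix.det_mul, Matrix.det_transpose, hPdet,
    one_mul, mul_one]
end
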